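/- Every y in Q[[q]][t] with L1~ y = 0 is annihilated by the twisted quantum differential operator: sum_{d=0}^{5} q^d * P_d(D~) ( prod_{m=1}^{d} (D~ + m)^3 ( y ) ) = 0, where the composition is: first apply prod_{m=1}^{d}(D~+m)^3, then P_d(D~), then multiply by q^d. (This is the operator obtained from the order 10, degree 5 quantum differential equation for J_E by the hyperplane twist H_d = prod_{m=1}^{d}(p+m)^3; factoring out the trivial term D^3(D-1)^3 from it recovers the Picard-Fuchs operator L1.) -/

import Mathlib

open PowerSeries

/-- The operator `D = q * d/dq` on `ℚ[[q]]`. -/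
noncomputable def Dop (f : ℚ⟦X⟧) : ℚ⟦X⟧ := X * derivative ℚ f

/-- Coefficient of `D^4` in the Picard-Fuchs operator. -/
noncomputable def A4 : ℚ⟦X⟧ := (1 - 289 * X - 57 * X ^ 2 + X ^ 3) * (1 - 3 * X) ^ 2
/-- Coefficient of `D^3` in the Picard-Fuchs operator. -/
noncomputable def A3 : ℚ⟦X⟧ := 4 * X * (3 * X - 1) * (143 + 57 * X - 87 * X ^ 2 + 3 * X ^ 3)
/-- Coefficient of `D^2` in the Picard-Fuchs operator. -/
noncomputable def A2 : ℚ⟦X⟧ :=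
  2 * X * (-212 - 473 * X + 725 * X ^ 2 - 435 * X ^ 3 + 27 * X ^ 4)
/-- Coefficient of `D^1` in the Picard-Fuchs operator. -/
noncomputable def A1 : ℚ⟦X⟧ :=
  2 * X * (-69 - 481 * X + 159 * X ^ 2 - 171 * X ^ 3 + 18 * X ^ 4)
/-- Coefficient of `D^0` in the Picard-Fuchs operator. -/
noncomputable def A0 : ℚ⟦X⟧ := X * (-17 - 202 * X - 8 * X ^ 2 - 54 * X ^ 3 + 9 * X ^ 4)

/-- The Picard-Fuchs operator of Rødland's mirror family of the Pfaffian
Calabi-Yau 3-fold, acting on `ℚ[[q]]` (here `q` is `PowerSeries.X`). -/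
noncomputable def L1 (f : ℚ⟦X⟧) : ℚ⟦X⟧ :=
  A4 * Dop^[4] f + A3 * Dop^[3] f + A2 * Dop^[2] f + A1 * Dop f + A0 * f

/-- The extension of `D` to the derivation on `ℚ[[q]][t]` with `D t = 1`
(where `t` plays the role of `ln q`). -/
noncomputable def Dt (y : Polynomial ℚ⟦X⟧) : Polynomial ℚ⟦X⟧ :=
  Polynomial.derivative y + y.sum fun n a => Polynomial.C (Dop a) * Polynomial.X ^ n

/-- The Picard-Fuchs operator acting on `ℚ[[q]][t]`, with `D` replaced by its
extension `Dt`. -/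
noncomputable def L1t (y : Polynomial ℚ⟦X⟧) : Polynomial ℚ⟦X⟧ :=
    Polynomial.C A4 * Dt^[4] y + Polynomial.C A3 * Dt^[3] y
  + Polynomial.C A2 * Dt^[2] y + Polynomial.C A1 * Dt y + Polynomial.C A0 * y

/-- Substitution of an operator `E` into a polynomial `P ∈ ℚ[X]`: `P(E) = Σ cₙ E^n`,
rational coefficients acting by scalar multiplication. -/
noncomputable def applyPoly (P : Polynomial ℚ) (E : Polynomial ℚ⟦X⟧ → Polynomial ℚ⟦X⟧)
    (y : Polynomial ℚ⟦X⟧) : Polynomial ℚ⟦X⟧ :=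
  P.sum fun n c => c • E^[n] y

/-- The hyperplane-twist operator `∏_{m=1}^{d} (D~ + m)^3` on `ℚ[[q]][t]`. -/
noncomputable def twistOp : ℕ → Polynomial ℚ⟦X⟧ → Polynomial ℚ⟦X⟧
  | 0 => id
  | d + 1 => fun y => (fun z => Dt z + (((d : ℚ) + 1)) • z)^[3] (twistOp d y)

/-- The polynomials `P₀, …, P₅` of the order 10, degree 5 quantum differential
equation for `J_E`. -/
noncomputable def Pd : ℕ → Polynomial ℚ
  | 0 => 3 * Polynomial.X ^ 7 * (Polynomial.X - 1) ^ 3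
  | 1 => Polynomial.X ^ 3 *
      (194 * Polynomial.X ^ 7 - 776 * Polynomial.X ^ 6 + 1072 * Polynomial.X ^ 5
        - 1405 * Polynomial.X ^ 4 - 1716 * Polynomial.X ^ 3 - 1272 * Polynomial.X ^ 2
        - 414 * Polynomial.X - 51)
  | 2 => 343 * Polynomial.X ^ 10 - 1715 * Polynomial.X ^ 9 + 3185 * Polynomial.X ^ 8
      - 58593 * Polynomial.X ^ 7 - 55484 * Polynomial.X ^ 6 - 460 * Polynomial.X ^ 5
      + 10697 * Polynomial.X ^ 4 + 1850 * Polynomial.X ^ 3 - 896 * Polynomial.X ^ 2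
      - 480 * Polynomial.X - 96
  | 3 => -99127 * Polynomial.X ^ 7 + 22736 * Polynomial.X ^ 5 - 11772 * Polynomial.X ^ 4
      - 34797 * Polynomial.X ^ 3 - 31654 * Polynomial.X ^ 2 - 13495 * Polynomial.X - 2175
  | 4 => -19551 * Polynomial.X ^ 4 - 39102 * Polynomial.X ^ 3 - 31360 * Polynomial.X ^ 2
      - 11524 * Polynomial.X - 1430
  | 5 => 343 * (Polynomial.X + 1)
  | _ => 0


set_option maxHeartbeats 4000000
section Aux

lemma Dop_add (f g : ℚ⟦X⟧) : Dop (f + g) = Dop f + Dop g := by simp [Dop, mul_add]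
lemma Dop_mul (f g : ℚ⟦X⟧) : Dop (f * g) = Dop f * g + f * Dop g := by
  simp only [Dop, Derivation.leibniz, smul_eq_mul]; ring
lemma Dop_X : Dop (X : ℚ⟦X⟧) = X := by simp [Dop]
lemma Dop_one : Dop (1 : ℚ⟦X⟧) = 0 := by simp [Dop]
lemma Dop_C (c : ℚ) : Dop (C c) = 0 := by simp [Dop]
lemma Dop_zero : Dop (0 : ℚ⟦X⟧) = 0 := by simp [Dop]
lemma Dop_sum {α : Type*} {s : Finset α} (f : α → ℚ⟦X⟧) :
    Dop (∑ i ∈ s, f i) = ∑ i ∈ s, Dop (f i) := by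
  simp [Dop, map_sum, Finset.mul_sum]

lemma coeff_sumpart (y : Polynomial ℚ⟦X⟧) (m : ℕ) :
    (y.sum fun n a => Polynomial.C (Dop a) * Polynomial.X ^ n).coeff m = Dop (y.coeff m) := by
  rw [Polynomial.coeff_sum]
  simp_rw [Polynomial.coeff_C_mul, Polynomial.coeff_X_pow]
  rw [Polynomial.sum_def]
  rw [Finset.sum_eq_single m]
  · by_cases h : m ∈ y.support
    · simp
    · simp [Polynomial.notMem_support_iff.mp h, Dop_zero]
  · intro b _ hb; simp [Ne.symm hb]
  · intro h; simp [Polynomial.notMem_support_iff.mp h, Dop_zero]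

lemma coeff_Dt (y : Polynomial ℚ⟦X⟧) (m : ℕ) :
    (Dt y).coeff m = (Polynomial.derivative y).coeff m + Dop (y.coeff m) := by
  rw [Dt, Polynomial.coeff_add, coeff_sumpart]

lemma Dt_add (u v : Polynomial ℚ⟦X⟧) : Dt (u + v) = Dt u + Dt v := by
  refine Polynomial.ext fun m => ?_
  simp only [coeff_Dt, Polynomial.coeff_add, Polynomial.derivative_add, Dop_add]
  ring

lemma Dt_zero : Dt (0 : Polynomial ℚ⟦X⟧) = 0 := by
  refine Polynomial.ext fun m => ?_
  simp [coeff_Dt, Dop_zero]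

lemma Dt_Cmul (a : ℚ⟦X⟧) (z : Polynomial ℚ⟦X⟧) :
    Dt (Polynomial.C a * z) = Polynomial.C (Dop a) * z + Polynomial.C a * Dt z := by
  refine Polynomial.ext fun m => ?_
  simp only [coeff_Dt, Polynomial.derivative_C_mul, Polynomial.coeff_C_mul, Dop_mul,
    Polynomial.coeff_add]
  ring

lemma smul_eq_Cmul (c : ℚ) (z : Polynomial ℚ⟦X⟧) :
    c • z = Polynomial.C (C c) * z := by
  rw [Algebra.smul_def, Polynomial.algebraMap_apply]
  rfl

lemma Dt_smul (c : ℚ) (z : Polynomial ℚ⟦X⟧) : Dt (c • z) = c • Dt z := by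
  rw [smul_eq_Cmul, smul_eq_Cmul, Dt_Cmul, Dop_C]; simp

lemma Dt_mul (u v : Polynomial ℚ⟦X⟧) : Dt (u * v) = Dt u * v + u * Dt v := by
  refine Polynomial.ext fun m => ?_
  simp only [coeff_Dt, Polynomial.derivative_mul, Polynomial.coeff_add, Polynomial.coeff_mul,
    Dop_sum, Dop_mul]
  rw [← Finset.sum_add_distrib, ← Finset.sum_add_distrib, ← Finset.sum_add_distrib]
  exact Finset.sum_congr rfl fun p _ => by ring

lemma Dt_one : Dt (1 : Polynomial ℚ⟦X⟧) = 0 := by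
  refine Polynomial.ext fun m => ?_
  simp only [coeff_Dt, Polynomial.derivative_one, Polynomial.coeff_zero, Polynomial.coeff_one]
  split <;> simp [Dop_one, Dop_zero]

lemma Dt_C (a : ℚ⟦X⟧) : Dt (Polynomial.C a) = Polynomial.C (Dop a) := by
  have := Dt_Cmul a 1
  simpa [Dt_one] using this

lemma Dt_CX : Dt (Polynomial.C (X : ℚ⟦X⟧)) = Polynomial.C (X : ℚ⟦X⟧) := by
  rw [Dt_C, Dop_X]

lemma Dt_neg (u : Polynomial ℚ⟦X⟧) : Dt (-u) = -Dt u := by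
  have h := Dt_add u (-u)
  rw [add_neg_cancel, Dt_zero] at h
  linear_combination -h

lemma Dt_sub (u v : Polynomial ℚ⟦X⟧) : Dt (u - v) = Dt u - Dt v := by
  rw [sub_eq_add_neg, Dt_add, Dt_neg, sub_eq_add_neg]

lemma Dt_natCast (n : ℕ) : Dt (n : Polynomial ℚ⟦X⟧) = 0 := by
  induction n with
  | zero => simpa using Dt_zero
  | succ k ih => push_cast; rw [Dt_add, ih, Dt_one, add_zero]

lemma Dt_ofNat (n : ℕ) [n.AtLeastTwo] :
    Dt (no_index (OfNat.ofNat n) : Polynomial ℚ⟦X⟧) = 0 := by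
  rw [show (OfNat.ofNat n : Polynomial ℚ⟦X⟧) = ((n : ℕ) : Polynomial ℚ⟦X⟧) by norm_cast]
  exact Dt_natCast n

lemma Dt_pow (u : Polynomial ℚ⟦X⟧) (n : ℕ) :
    Dt (u ^ n) = n * u ^ (n - 1) * Dt u := by
  induction n with
  | zero => simpa using Dt_one
  | succ k ih =>
    rw [pow_succ, Dt_mul, ih]
    cases k with
    | zero => simp
    | succ j => push_cast; rw [pow_succ]; ring

lemma Dt_iter_succ (n : ℕ) (z : Polynomial ℚ⟦X⟧) : Dt (Dt^[n] z) = Dt^[n + 1] z :=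
  (Function.iterate_succ_apply' Dt n z).symm

lemma Dt_Dt (z : Polynomial ℚ⟦X⟧) : Dt (Dt z) = Dt^[2] z := rfl

lemma Dt_iter_add (n : ℕ) (u v : Polynomial ℚ⟦X⟧) :
    Dt^[n] (u + v) = Dt^[n] u + Dt^[n] v := by
  induction n generalizing u v with
  | zero => simp
  | succ k ih => simp only [Function.iterate_succ_apply, Dt_add, ih]

lemma Dt_iter_smul (n : ℕ) (c : ℚ) (u : Polynomial ℚ⟦X⟧) :
    Dt^[n] (c • u) = c • Dt^[n] u := by
  induction n generalizing u with
  | zero => simp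
  | succ k ih => simp only [Function.iterate_succ_apply, Dt_smul, ih]

lemma Dt_iter_iter (a b : ℕ) (z : Polynomial ℚ⟦X⟧) :
    Dt^[a] (Dt^[b] z) = Dt^[a + b] z :=
  (Function.iterate_add_apply Dt a b z).symm

lemma Dt_iter_Dt (a : ℕ) (z : Polynomial ℚ⟦X⟧) :
    Dt^[a] (Dt z) = Dt^[a + 1] z := by
  rw [show Dt z = Dt^[1] z from rfl, Dt_iter_iter]

lemma iter3 {α : Type*} (f : α → α) (x : α) : f^[3] x = f (f (f x)) := rfl

lemma applyPoly_add (P Q : Polynomial ℚ) (E : Polynomial ℚ⟦X⟧ → Polynomial ℚ⟦X⟧)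
    (y : Polynomial ℚ⟦X⟧) :
    applyPoly (P + Q) E y = applyPoly P E y + applyPoly Q E y := by
  unfold applyPoly
  apply Polynomial.sum_add_index <;> intros <;> simp [add_smul]

lemma applyPoly_CXpow (c : ℚ) (n : ℕ) (E : Polynomial ℚ⟦X⟧ → Polynomial ℚ⟦X⟧)
    (y : Polynomial ℚ⟦X⟧) :
    applyPoly (Polynomial.C c * Polynomial.X ^ n) E y = c • E^[n] y := by
  unfold applyPoly
  rw [Polynomial.C_mul_X_pow_eq_monomial]
  exact Polynomial.sum_monomial_index c _ (by simp)

end Aux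

/-- Every solution of the Picard-Fuchs equation in `ℚ[[q]][t]` is annihilated by the
twisted quantum differential operator `Σ_{d=0}^{5} q^d P_d(D~) ∏_{m=1}^{d} (D~ + m)^3`
(obtained from the quantum differential equation for `J_E` by the hyperplane twist
`H_d = ∏_{m=1}^{d} (p + m)^3`). -/
theorem pfaffian_twisted_quantum_operator_annihilates (y : Polynomial ℚ⟦X⟧)
    (hy : L1t y = 0) :
    ∑ d ∈ Finset.range 6,
      Polynomial.C ((X : ℚ⟦X⟧) ^ d) * applyPoly (Pd d) Dt (twistOp d y) = 0 := by
  have E0 : ((-17) * Polynomial.C (X : ℚ⟦X⟧) + (-202) * Polynomial.C (X : ℚ⟦X⟧) ^ 2 + (-8) * Polynomial.C (X : ℚ⟦X⟧) ^ 3 + (-54) * Polynomial.C (X : ℚ⟦X⟧) ^ 4 + 9 * Polynomial.C (X : ℚ⟦X⟧) ^ 5) * (y) + ((-138) * Polynomial.C (X : ℚ⟦X⟧) + (-962) * Polynomial.C (X : ℚ⟦X⟧) ^ 2 + 318 * Polynomial.C (X : ℚ⟦X⟧) ^ 3 + (-342) * Polynomial.C (X : ℚ⟦X⟧) ^ 4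 + 36 * Polynomial.C (X : ℚ⟦X⟧) ^ 5) * (Dt y) + ((-424) * Polynomial.C (X : ℚ⟦X⟧) + (-946) * Polynomial.C (X : ℚ⟦X⟧) ^ 2 + 1450 * Polynomial.C (X : ℚ⟦X⟧) ^ 3 + (-870) * Polynomial.C (X : ℚ⟦X⟧) ^ 4 + 54 * Polynomial.C (X : ℚ⟦X⟧) ^ 5) * (Dt^[2] y) + ((-572) * Polynomial.C (X : ℚ⟦X⟧) + 1488 * Polynomial.C (X : ℚ⟦X⟧) ^ 2 + 1032 * Polynomial.C (X : ℚ⟦X⟧) ^ 3 + (-1056) * Polynomial.C (X : ℚ⟦X⟧) ^ 4 + 36 * Polynomial.C (X : ℚ⟦X⟧) ^ 5) * (Dt^[3] y) + (1 + (-295) * Polynomial.C (X : ℚ⟦X⟧) + 1686 * Polynomial.C (X : ℚ⟦X⟧) ^ 2 + (-2258) * Polynomial.C (X : ℚ⟦X⟧) ^ 3 + (-519) * Polynomial.C (X : ℚ⟦X⟧) ^ 4 + 9 * Polynomial.C (X : ℚ⟦X⟧) ^ 5) * (Dt^[4] y) = 0 := by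
    have h := hy
    simp only [L1t, A4, A3, A2, A1, A0] at h
    simp only [Algebra.smul_def, map_add, map_sub, map_neg, map_mul, map_pow, map_one, map_ofNat, map_natCast, Nat.cast_ofNat, one_smul] at h
    linear_combination h
  have E1 : ((-17) * Polynomial.C (X : ℚ⟦X⟧) + (-404) * Polynomial.C (X : ℚ⟦X⟧) ^ 2 + (-24) * Polynomial.C (X : ℚ⟦X⟧) ^ 3 + (-216) * Polynomial.C (X : ℚ⟦X⟧) ^ 4 + 45 * Polynomial.C (X : ℚ⟦X⟧) ^ 5) * (y) + ((-155) * Polynomial.C (X : ℚ⟦X⟧) + (-2126) * Polynomial.C (X : ℚ⟦X⟧) ^ 2 + 946 * Polynomial.C (X : ℚ⟦X⟧) ^ 3 + (-1422) * Polynomial.C (X : ℚ⟦X⟧) ^ 4 + 189 * Polynomial.C (X : ℚ⟦X⟧) ^ 5) * (Dt y) + ((-562) * Polynomial.C (X : ℚ⟦X⟧) + (-2854) * Polynomial.C (X : ℚ⟦X⟧) ^ 2 + 4668 * Polynomial.C (X : ℚ⟦X⟧) ^ 3 + (-3822) * Polynomial.C (X : ℚ⟦X⟧) ^ 4 + 306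 * Polynomial.C (X : ℚ⟦X⟧) ^ 5) * (Dt^[2] y) + ((-996) * Polynomial.C (X : ℚ⟦X⟧) + 2030 * Polynomial.C (X : ℚ⟦X⟧) ^ 2 + 4546 * Polynomial.C (X : ℚ⟦X⟧) ^ 3 + (-5094) * Polynomial.C (X : ℚ⟦X⟧) ^ 4 + 234 * Polynomial.C (X : ℚ⟦X⟧) ^ 5) * (Dt^[3] y) + ((-867) * Polynomial.C (X : ℚ⟦X⟧) + 4860 * Polynomial.C (X : ℚ⟦X⟧) ^ 2 + (-5742) * Polynomial.C (X : ℚ⟦X⟧) ^ 3 + (-3132) * Polynomial.C (X : ℚ⟦X⟧) ^ 4 + 81 * Polynomial.C (X : ℚ⟦X⟧) ^ 5) * (Dt^[4] y) + (1 + (-295) * Polynomial.C (X : ℚ⟦X⟧) + 1686 * Polynomial.C (X : ℚ⟦X⟧) ^ 2 + (-2258) * Polynomial.C (X : ℚ⟦X⟧) ^ 3 + (-519) * Polynomial.C (X : ℚ⟦X⟧) ^ 4 + 9 * Polynomial.C (X : ℚ⟦X⟧) ^ 5) * (Dt^[5] y) = 0 := by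
    have h := congrArg Dt E0
    rw [Dt_zero] at h
    simp only [Dt_add, Dt_mul, Dt_pow, Dt_neg, Dt_ofNat, Dt_one, Dt_natCast, Dt_CX,
      Dt_Dt, Dt_iter_succ, Nat.cast_ofNat, Nat.reduceAdd, Nat.reduceSub] at h
    linear_combination h
  have E2 : ((-17) * Polynomial.C (X : ℚ⟦X⟧) + (-808) * Polynomial.C (X : ℚ⟦X⟧) ^ 2 + (-72) * Polynomial.C (X : ℚ⟦X⟧) ^ 3 + (-864) * Polynomial.C (X : ℚ⟦X⟧) ^ 4 + 225 * Polynomial.C (X : ℚ⟦X⟧) ^ 5) * (y) + ((-172) * Polynomial.C (X : ℚ⟦X⟧) + (-4656) * Polynomial.C (X : ℚ⟦X⟧) ^ 2 + 2814 * Polynomial.C (X : ℚ⟦X⟧) ^ 3 + (-5904) * Polynomial.C (X : ℚ⟦X⟧) ^ 4 + 990 * Polynomial.C (X : ℚ⟦X⟧) ^ 5) * (Dt y) + ((-717) * Polynomial.C (X : ℚ⟦X⟧) + (-7834) * Polynomial.C (X : ℚ⟦X⟧) ^ 2 + 14950 * Polynomial.C (X : ℚ⟦X⟧) ^ 3 +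 (-16710) * Polynomial.C (X : ℚ⟦X⟧) ^ 4 + 1719 * Polynomial.C (X : ℚ⟦X⟧) ^ 5) * (Dt^[2] y) + ((-1558) * Polynomial.C (X : ℚ⟦X⟧) + 1206 * Polynomial.C (X : ℚ⟦X⟧) ^ 2 + 18306 * Polynomial.C (X : ℚ⟦X⟧) ^ 3 + (-24198) * Polynomial.C (X : ℚ⟦X⟧) ^ 4 + 1476 * Polynomial.C (X : ℚ⟦X⟧) ^ 5) * (Dt^[3] y) + ((-1863) * Polynomial.C (X : ℚ⟦X⟧) + 11750 * Polynomial.C (X : ℚ⟦X⟧) ^ 2 + (-12680) * Polynomial.C (X : ℚ⟦X⟧) ^ 3 + (-17622) * Polynomial.C (X : ℚ⟦X⟧) ^ 4 + 639 * Polynomial.C (X : ℚ⟦X⟧) ^ 5) * (Dt^[4] y) + ((-1162) * Polynomial.C (X : ℚ⟦X⟧) + 8232 * Polynomial.C (X : ℚ⟦X⟧) ^ 2 + (-12516) * Polynomial.C (X : ℚ⟦X⟧) ^ 3 + (-5208) * Polynomial.C (X : ℚ⟦X⟧) ^ 4 + 126 * Polynomial.C (X : ℚ⟦X⟧) ^ 5)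 * (Dt^[5] y) + (1 + (-295) * Polynomial.C (X : ℚ⟦X⟧) + 1686 * Polynomial.C (X : ℚ⟦X⟧) ^ 2 + (-2258) * Polynomial.C (X : ℚ⟦X⟧) ^ 3 + (-519) * Polynomial.C (X : ℚ⟦X⟧) ^ 4 + 9 * Polynomial.C (X : ℚ⟦X⟧) ^ 5) * (Dt^[6] y) = 0 := by
    have h := congrArg Dt E1
    rw [Dt_zero] at h
    simp only [Dt_add, Dt_mul, Dt_pow, Dt_neg, Dt_ofNat, Dt_one, Dt_natCast, Dt_CX,
      Dt_Dt, Dt_iter_succ, Nat.cast_ofNat, Nat.reduceAdd, Nat.reduceSub] at h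
    linear_combination h
  have E3 : ((-17) * Polynomial.C (X : ℚ⟦X⟧) + (-1616) * Polynomial.C (X : ℚ⟦X⟧) ^ 2 + (-216) * Polynomial.C (X : ℚ⟦X⟧) ^ 3 + (-3456) * Polynomial.C (X : ℚ⟦X⟧) ^ 4 + 1125 * Polynomial.C (X : ℚ⟦X⟧) ^ 5) * (y) + ((-189) * Polynomial.C (X : ℚ⟦X⟧) + (-10120) * Polynomial.C (X : ℚ⟦X⟧) ^ 2 + 8370 * Polynomial.C (X : ℚ⟦X⟧) ^ 3 + (-24480) * Polynomial.C (X : ℚ⟦X⟧) ^ 4 + 5175 * Polynomial.C (X : ℚ⟦X⟧) ^ 5) * (Dt y) + ((-889) * Polynomial.C (X : ℚ⟦X⟧) + (-20324) * Polynomial.C (X : ℚ⟦X⟧) ^ 2 + 47664 * Polynomial.C (X : ℚ⟦X⟧) ^ 3 + (-72744) * Polynomial.C (X : ℚ⟦X⟧) ^ 4 + 9585 * Polynomial.C (X : ℚ⟦X⟧) ^ 5) * (Dt^[2] y) + ((-2275) * Polynomial.C (X : ℚ⟦X⟧) + (-5422) * Polynomial.C (X : ℚ⟦X⟧) ^ 2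 + 69868 * Polynomial.C (X : ℚ⟦X⟧) ^ 3 + (-113502) * Polynomial.C (X : ℚ⟦X⟧) ^ 4 + 9099 * Polynomial.C (X : ℚ⟦X⟧) ^ 5) * (Dt^[3] y) + ((-3421) * Polynomial.C (X : ℚ⟦X⟧) + 24706 * Polynomial.C (X : ℚ⟦X⟧) ^ 2 + (-19734) * Polynomial.C (X : ℚ⟦X⟧) ^ 3 + (-94686) * Polynomial.C (X : ℚ⟦X⟧) ^ 4 + 4671 * Polynomial.C (X : ℚ⟦X⟧) ^ 5) * (Dt^[4] y) + ((-3025) * Polynomial.C (X : ℚ⟦X⟧) + 28214 * Polynomial.C (X : ℚ⟦X⟧) ^ 2 + (-50228) * Polynomial.C (X : ℚ⟦X⟧) ^ 3 + (-38454) * Polynomial.C (X : ℚ⟦X⟧) ^ 4 + 1269 * Polynomial.C (X : ℚ⟦X⟧) ^ 5) * (Dt^[5] y) + ((-1457) * Polynomial.C (X : ℚ⟦X⟧) + 11604 * Polynomial.C (X : ℚ⟦X⟧) ^ 2 + (-19290) * Polynomial.C (X : ℚ⟦X⟧) ^ 3 + (-7284) * Polynomial.C (X : ℚ⟦X⟧)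 ^ 4 + 171 * Polynomial.C (X : ℚ⟦X⟧) ^ 5) * (Dt^[6] y) + (1 + (-295) * Polynomial.C (X : ℚ⟦X⟧) + 1686 * Polynomial.C (X : ℚ⟦X⟧) ^ 2 + (-2258) * Polynomial.C (X : ℚ⟦X⟧) ^ 3 + (-519) * Polynomial.C (X : ℚ⟦X⟧) ^ 4 + 9 * Polynomial.C (X : ℚ⟦X⟧) ^ 5) * (Dt^[7] y) = 0 := by
    have h := congrArg Dt E2
    rw [Dt_zero] at h
    simp only [Dt_add, Dt_mul, Dt_pow, Dt_neg, Dt_ofNat, Dt_one, Dt_natCast, Dt_CX,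
      Dt_Dt, Dt_iter_succ, Nat.cast_ofNat, Nat.reduceAdd, Nat.reduceSub] at h
    linear_combination h
  have E4 : ((-17) * Polynomial.C (X : ℚ⟦X⟧) + (-3232) * Polynomial.C (X : ℚ⟦X⟧) ^ 2 + (-648) * Polynomial.C (X : ℚ⟦X⟧) ^ 3 + (-13824) * Polynomial.C (X : ℚ⟦X⟧) ^ 4 + 5625 * Polynomial.C (X : ℚ⟦X⟧) ^ 5) * (y) + ((-206) * Polynomial.C (X : ℚ⟦X⟧) + (-21856) * Polynomial.C (X : ℚ⟦X⟧) ^ 2 + 24894 * Polynomial.C (X : ℚ⟦X⟧) ^ 3 + (-101376) * Polynomial.C (X : ℚ⟦X⟧) ^ 4 + 27000 * Polynomial.C (X : ℚ⟦X⟧) ^ 5) * (Dt y) + ((-1078) * Polynomial.C (X : ℚ⟦X⟧) + (-50768) * Polynomial.C (X : ℚ⟦X⟧) ^ 2 + 151362 * Polynomial.C (X : ℚ⟦X⟧) ^ 3 + (-315456) * Polynomial.C (X : ℚ⟦X⟧) ^ 4 + 53100 * Polynomial.C (X : ℚ⟦X⟧) ^ 5) * (Dt^[2] y) + ((-3164)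 * Polynomial.C (X : ℚ⟦X⟧) + (-31168) * Polynomial.C (X : ℚ⟦X⟧) ^ 2 + 257268 * Polynomial.C (X : ℚ⟦X⟧) ^ 3 + (-526752) * Polynomial.C (X : ℚ⟦X⟧) ^ 4 + 55080 * Polynomial.C (X : ℚ⟦X⟧) ^ 5) * (Dt^[3] y) + ((-5696) * Polynomial.C (X : ℚ⟦X⟧) + 43990 * Polynomial.C (X : ℚ⟦X⟧) ^ 2 + 10666 * Polynomial.C (X : ℚ⟦X⟧) ^ 3 + (-492246) * Polynomial.C (X : ℚ⟦X⟧) ^ 4 + 32454 * Polynomial.C (X : ℚ⟦X⟧) ^ 5) * (Dt^[4] y) + ((-6446) * Polynomial.C (X : ℚ⟦X⟧) + 81134 * Polynomial.C (X : ℚ⟦X⟧) ^ 2 + (-170418) * Polynomial.C (X : ℚ⟦X⟧) ^ 3 + (-248502) * Polynomial.C (X : ℚ⟦X⟧) ^ 4 + 11016 * Polynomial.C (X : ℚ⟦X⟧) ^ 5) * (Dt^[5] y) + ((-4482) * Polynomial.C (X : ℚ⟦X⟧) + 51422 * Polynomial.C (X : ℚ⟦X⟧) ^ 2 + (-108098)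 * Polynomial.C (X : ℚ⟦X⟧) ^ 3 + (-67590) * Polynomial.C (X : ℚ⟦X⟧) ^ 4 + 2124 * Polynomial.C (X : ℚ⟦X⟧) ^ 5) * (Dt^[6] y) + ((-1752) * Polynomial.C (X : ℚ⟦X⟧) + 14976 * Polynomial.C (X : ℚ⟦X⟧) ^ 2 + (-26064) * Polynomial.C (X : ℚ⟦X⟧) ^ 3 + (-9360) * Polynomial.C (X : ℚ⟦X⟧) ^ 4 + 216 * Polynomial.C (X : ℚ⟦X⟧) ^ 5) * (Dt^[7] y) + (1 + (-295) * Polynomial.C (X : ℚ⟦X⟧) + 1686 * Polynomial.C (X : ℚ⟦X⟧) ^ 2 + (-2258) * Polynomial.C (X : ℚ⟦X⟧) ^ 3 + (-519) * Polynomial.C (X : ℚ⟦X⟧) ^ 4 + 9 * Polynomial.C (X : ℚ⟦X⟧) ^ 5) * (Dt^[8] y) = 0 := by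
    have h := congrArg Dt E3
    rw [Dt_zero] at h
    simp only [Dt_add, Dt_mul, Dt_pow, Dt_neg, Dt_ofNat, Dt_one, Dt_natCast, Dt_CX,
      Dt_Dt, Dt_iter_succ, Nat.cast_ofNat, Nat.reduceAdd, Nat.reduceSub] at h
    linear_combination h
  have E5 : ((-17) * Polynomial.C (X : ℚ⟦X⟧) + (-6464) * Polynomial.C (X : ℚ⟦X⟧) ^ 2 + (-1944) * Polynomial.C (X : ℚ⟦X⟧) ^ 3 + (-55296) * Polynomial.C (X : ℚ⟦X⟧) ^ 4 + 28125 * Polynomial.C (X : ℚ⟦X⟧) ^ 5) * (y) + ((-223) * Polynomial.C (X : ℚ⟦X⟧) + (-46944) * Polynomial.C (X : ℚ⟦X⟧) ^ 2 + 74034 * Polynomial.C (X : ℚ⟦X⟧) ^ 3 + (-419328) * Polynomial.C (X : ℚ⟦X⟧) ^ 4 + 140625 * Polynomial.C (X : ℚ⟦X⟧) ^ 5) * (Dt y) + ((-1284) * Polynomial.C (X : ℚ⟦X⟧) + (-123392) * Polynomial.C (X : ℚ⟦X⟧) ^ 2 + 478980 * Polynomial.C (X : ℚ⟦X⟧) ^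 3 + (-1363200) * Polynomial.C (X : ℚ⟦X⟧) ^ 4 + 292500 * Polynomial.C (X : ℚ⟦X⟧) ^ 5) * (Dt^[2] y) + ((-4242) * Polynomial.C (X : ℚ⟦X⟧) + (-113104) * Polynomial.C (X : ℚ⟦X⟧) ^ 2 + 923166 * Polynomial.C (X : ℚ⟦X⟧) ^ 3 + (-2422464) * Polynomial.C (X : ℚ⟦X⟧) ^ 4 + 328500 * Polynomial.C (X : ℚ⟦X⟧) ^ 5) * (Dt^[3] y) + ((-8860) * Polynomial.C (X : ℚ⟦X⟧) + 56812 * Polynomial.C (X : ℚ⟦X⟧) ^ 2 + 289266 * Polynomial.C (X : ℚ⟦X⟧) ^ 3 + (-2495736) * Polynomial.C (X : ℚ⟦X⟧) ^ 4 + 217350 * Polynomial.C (X : ℚ⟦X⟧) ^ 5) * (Dt^[4] y) + ((-12142) * Polynomial.C (X : ℚ⟦X⟧) + 206258 * Polynomial.C (X : ℚ⟦X⟧) ^ 2 + (-500588) * Polynomial.C (X : ℚ⟦X⟧) ^ 3 + (-1486254) * Polynomial.C (X : ℚ⟦X⟧) ^ 4 + 87534 * Polynomial.C (X : ℚ⟦X⟧)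 ^ 5) * (Dt^[5] y) + ((-10928) * Polynomial.C (X : ℚ⟦X⟧) + 183978 * Polynomial.C (X : ℚ⟦X⟧) ^ 2 + (-494712) * Polynomial.C (X : ℚ⟦X⟧) ^ 3 + (-518862) * Polynomial.C (X : ℚ⟦X⟧) ^ 4 + 21636 * Polynomial.C (X : ℚ⟦X⟧) ^ 5) * (Dt^[6] y) + ((-6234) * Polynomial.C (X : ℚ⟦X⟧) + 81374 * Polynomial.C (X : ℚ⟦X⟧) ^ 2 + (-186290) * Polynomial.C (X : ℚ⟦X⟧) ^ 3 + (-105030) * Polynomial.C (X : ℚ⟦X⟧) ^ 4 + 3204 * Polynomial.C (X : ℚ⟦X⟧) ^ 5) * (Dt^[7] y) + ((-2047) * Polynomial.C (X : ℚ⟦X⟧) + 18348 * Polynomial.C (X : ℚ⟦X⟧) ^ 2 + (-32838) * Polynomial.C (X : ℚ⟦X⟧) ^ 3 + (-11436) * Polynomial.C (X : ℚ⟦X⟧) ^ 4 + 261 * Polynomial.C (X : ℚ⟦X⟧) ^ 5) * (Dt^[8] y) + (1 + (-295) * Polynomial.C (X : ℚ⟦X⟧) + 1686 * Polynomial.C (X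 : ℚ⟦X⟧) ^ 2 + (-2258) * Polynomial.C (X : ℚ⟦X⟧) ^ 3 + (-519) * Polynomial.C (X : ℚ⟦X⟧) ^ 4 + 9 * Polynomial.C (X : ℚ⟦X⟧) ^ 5) * (Dt^[9] y) = 0 := by
    have h := congrArg Dt E4
    rw [Dt_zero] at h
    simp only [Dt_add, Dt_mul, Dt_pow, Dt_neg, Dt_ofNat, Dt_one, Dt_natCast, Dt_CX,
      Dt_Dt, Dt_iter_succ, Nat.cast_ofNat, Nat.reduceAdd, Nat.reduceSub] at h
    linear_combination h
  have E6 : ((-17) * Polynomial.C (X : ℚ⟦X⟧) + (-12928) * Polynomial.C (X : ℚ⟦X⟧) ^ 2 + (-5832) * Polynomial.C (X : ℚ⟦X⟧) ^ 3 + (-221184) * Polynomial.C (X : ℚ⟦X⟧) ^ 4 + 140625 * Polynomial.C (X : ℚ⟦X⟧) ^ 5) * (y) + ((-240) * Polynomial.C (X : ℚ⟦X⟧) + (-100352) * Polynomial.C (X : ℚ⟦X⟧) ^ 2 + 220158 * Polynomial.C (X : ℚ⟦X⟧) ^ 3 + (-1732608) * Polynomial.C (X : ℚ⟦X⟧) ^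 4 + 731250 * Polynomial.C (X : ℚ⟦X⟧) ^ 5) * (Dt y) + ((-1507) * Polynomial.C (X : ℚ⟦X⟧) + (-293728) * Polynomial.C (X : ℚ⟦X⟧) ^ 2 + 1510974 * Polynomial.C (X : ℚ⟦X⟧) ^ 3 + (-5872128) * Polynomial.C (X : ℚ⟦X⟧) ^ 4 + 1603125 * Polynomial.C (X : ℚ⟦X⟧) ^ 5) * (Dt^[2] y) + ((-5526) * Polynomial.C (X : ℚ⟦X⟧) + (-349600) * Polynomial.C (X : ℚ⟦X⟧) ^ 2 + 3248478 * Polynomial.C (X : ℚ⟦X⟧) ^ 3 + (-11053056) * Polynomial.C (X : ℚ⟦X⟧) ^ 4 + 1935000 * Polynomial.C (X : ℚ⟦X⟧) ^ 5) * (Dt^[3] y) + ((-13102) * Polynomial.C (X : ℚ⟦X⟧) + 520 * Polynomial.C (X : ℚ⟦X⟧) ^ 2 + 1790964 * Polynomial.C (X : ℚ⟦X⟧) ^ 3 + (-12405408) * Polynomial.C (X : ℚ⟦X⟧) ^ 4 + 1415250 * Polynomial.C (X : ℚ⟦X⟧) ^ 5) * (Dt^[4] y) + ((-21002) * Polynomial.C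 (X : ℚ⟦X⟧) + 469328 * Polynomial.C (X : ℚ⟦X⟧) ^ 2 + (-1212498) * Polynomial.C (X : ℚ⟦X⟧) ^ 3 + (-8440752) * Polynomial.C (X : ℚ⟦X⟧) ^ 4 + 655020 * Polynomial.C (X : ℚ⟦X⟧) ^ 5) * (Dt^[5] y) + ((-23070) * Polynomial.C (X : ℚ⟦X⟧) + 574214 * Polynomial.C (X : ℚ⟦X⟧) ^ 2 + (-1984724) * Polynomial.C (X : ℚ⟦X⟧) ^ 3 + (-3561702) * Polynomial.C (X : ℚ⟦X⟧) ^ 4 + 195714 * Polynomial.C (X : ℚ⟦X⟧) ^ 5) * (Dt^[6] y) + ((-17162) * Polynomial.C (X : ℚ⟦X⟧) + 346726 * Polynomial.C (X : ℚ⟦X⟧) ^ 2 + (-1053582) * Polynomial.C (X : ℚ⟦X⟧) ^ 3 + (-938982) * Polynomial.C (X : ℚ⟦X⟧) ^ 4 + 37656 * Polynomial.C (X : ℚ⟦X⟧) ^ 5) * (Dt^[7] y) + ((-8281) * Polynomial.C (X : ℚ⟦X⟧) + 118070 * Polynomial.C (X : ℚ⟦X⟧) ^ 2 + (-284804) * Polynomial.C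 (X : ℚ⟦X⟧) ^ 3 + (-150774) * Polynomial.C (X : ℚ⟦X⟧) ^ 4 + 4509 * Polynomial.C (X : ℚ⟦X⟧) ^ 5) * (Dt^[8] y) + ((-2342) * Polynomial.C (X : ℚ⟦X⟧) + 21720 * Polynomial.C (X : ℚ⟦X⟧) ^ 2 + (-39612) * Polynomial.C (X : ℚ⟦X⟧) ^ 3 + (-13512) * Polynomial.C (X : ℚ⟦X⟧) ^ 4 + 306 * Polynomial.C (X : ℚ⟦X⟧) ^ 5) * (Dt^[9] y) + (1 + (-295) * Polynomial.C (X : ℚ⟦X⟧) + 1686 * Polynomial.C (X : ℚ⟦X⟧) ^ 2 + (-2258) * Polynomial.C (X : ℚ⟦X⟧) ^ 3 + (-519) * Polynomial.C (X : ℚ⟦X⟧) ^ 4 + 9 * Polynomial.C (X : ℚ⟦X⟧) ^ 5) * (Dt^[10] y) = 0 := by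
    have h := congrArg Dt E5
    rw [Dt_zero] at h
    simp only [Dt_add, Dt_mul, Dt_pow, Dt_neg, Dt_ofNat, Dt_one, Dt_natCast, Dt_CX,
      Dt_Dt, Dt_iter_succ, Nat.cast_ofNat, Nat.reduceAdd, Nat.reduceSub] at h
    linear_combination h
  have E7 : ((-17) * Polynomial.C (X : ℚ⟦X⟧) + (-25856) * Polynomial.C (X : ℚ⟦X⟧) ^ 2 + (-17496) * Polynomial.C (X : ℚ⟦X⟧) ^ 3 + (-884736) * Polynomial.C (X : ℚ⟦X⟧) ^ 4 + 703125 * Polynomial.C (X : ℚ⟦X⟧) ^ 5) * (y) + ((-257) * Polynomial.C (X : ℚ⟦X⟧) + (-213632) * Polynomial.C (X : ℚ⟦X⟧) ^ 2 + 654642 * Polynomial.C (X : ℚ⟦X⟧) ^ 3 + (-7151616) * Polynomial.C (X : ℚ⟦X⟧) ^ 4 + 3796875 * Polynomial.C (X : ℚ⟦X⟧) ^ 5) * (Dt y) + ((-1747) * Polynomial.C (X : ℚ⟦X⟧) + (-687808) * Polynomial.C (X : ℚ⟦X⟧) ^ 2 + 4753080 * Polynomial.C (X : ℚ⟦X⟧)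 ^ 3 + (-25221120) * Polynomial.C (X : ℚ⟦X⟧) ^ 4 + 8746875 * Polynomial.C (X : ℚ⟦X⟧) ^ 5) * (Dt^[2] y) + ((-7033) * Polynomial.C (X : ℚ⟦X⟧) + (-992928) * Polynomial.C (X : ℚ⟦X⟧) ^ 2 + 11256408 * Polynomial.C (X : ℚ⟦X⟧) ^ 3 + (-50084352) * Polynomial.C (X : ℚ⟦X⟧) ^ 4 + 11278125 * Polynomial.C (X : ℚ⟦X⟧) ^ 5) * (Dt^[3] y) + ((-18628) * Polynomial.C (X : ℚ⟦X⟧) + (-348560) * Polynomial.C (X : ℚ⟦X⟧) ^ 2 + 8621370 * Polynomial.C (X : ℚ⟦X⟧) ^ 3 + (-60674688) * Polynomial.C (X : ℚ⟦X⟧) ^ 4 + 9011250 * Polynomial.C (X : ℚ⟦X⟧) ^ 5) * (Dt^[4] y) + ((-34104) * Polynomial.C (X : ℚ⟦X⟧) + 939176 * Polynomial.C (X : ℚ⟦X⟧) ^ 2 + (-1846530) * Polynomial.C (X : ℚ⟦X⟧) ^ 3 + (-46168416) * Polynomial.C (X : ℚ⟦X⟧) ^ 4 + 4690350 * Polynomial.C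 (X : ℚ⟦X⟧) ^ 5) * (Dt^[5] y) + ((-44072) * Polynomial.C (X : ℚ⟦X⟧) + 1617756 * Polynomial.C (X : ℚ⟦X⟧) ^ 2 + (-7166670) * Polynomial.C (X : ℚ⟦X⟧) ^ 3 + (-22687560) * Polynomial.C (X : ℚ⟦X⟧) ^ 4 + 1633590 * Polynomial.C (X : ℚ⟦X⟧) ^ 5) * (Dt^[6] y) + ((-40232) * Polynomial.C (X : ℚ⟦X⟧) + 1267666 * Polynomial.C (X : ℚ⟦X⟧) ^ 2 + (-5145470) * Polynomial.C (X : ℚ⟦X⟧) ^ 3 + (-7317630) * Polynomial.C (X : ℚ⟦X⟧) ^ 4 + 383994 * Polynomial.C (X : ℚ⟦X⟧) ^ 5) * (Dt^[7] y) + ((-25443) * Polynomial.C (X : ℚ⟦X⟧) + 582866 * Polynomial.C (X : ℚ⟦X⟧) ^ 2 + (-1907994) * Polynomial.C (X : ℚ⟦X⟧) ^ 3 + (-1542078) * Polynomial.C (X : ℚ⟦X⟧) ^ 4 + 60201 * Polynomial.C (X : ℚ⟦X⟧) ^ 5) * (Dt^[8] y) + ((-10623) * Polynomial.C (X : ℚ⟦X⟧)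 + 161510 * Polynomial.C (X : ℚ⟦X⟧) ^ 2 + (-403640) * Polynomial.C (X : ℚ⟦X⟧) ^ 3 + (-204822) * Polynomial.C (X : ℚ⟦X⟧) ^ 4 + 6039 * Polynomial.C (X : ℚ⟦X⟧) ^ 5) * (Dt^[9] y) + ((-2637) * Polynomial.C (X : ℚ⟦X⟧) + 25092 * Polynomial.C (X : ℚ⟦X⟧) ^ 2 + (-46386) * Polynomial.C (X : ℚ⟦X⟧) ^ 3 + (-15588) * Polynomial.C (X : ℚ⟦X⟧) ^ 4 + 351 * Polynomial.C (X : ℚ⟦X⟧) ^ 5) * (Dt^[10] y) + (1 + (-295) * Polynomial.C (X : ℚ⟦X⟧) + 1686 * Polynomial.C (X : ℚ⟦X⟧) ^ 2 + (-2258) * Polynomial.C (X : ℚ⟦X⟧) ^ 3 + (-519) * Polynomial.C (X : ℚ⟦X⟧) ^ 4 + 9 * Polynomial.C (X : ℚ⟦X⟧) ^ 5) * (Dt^[11] y) = 0 := by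
    have h := congrArg Dt E6
    rw [Dt_zero] at h
    simp only [Dt_add, Dt_mul, Dt_pow, Dt_neg, Dt_ofNat, Dt_one, Dt_natCast, Dt_CX,
      Dt_Dt, Dt_iter_succ, Nat.cast_ofNat, Nat.reduceAdd, Nat.reduceSub] at h
    linear_combination h
  have E8 : ((-17) * Polynomial.C (X : ℚ⟦X⟧) + (-51712) * Polynomial.C (X : ℚ⟦X⟧) ^ 2 + (-52488) * Polynomial.C (X : ℚ⟦X⟧) ^ 3 + (-3538944) * Polynomial.C (X : ℚ⟦X⟧) ^ 4 + 3515625 * Polynomial.C (X : ℚ⟦X⟧) ^ 5) * (y) + ((-274) * Polynomial.C (X : ℚ⟦X⟧) + (-453120) * Polynomial.C (X : ℚ⟦X⟧) ^ 2 + 1946430 * Polynomial.C (X : ℚ⟦X⟧) ^ 3 + (-29491200) * Polynomial.C (X : ℚ⟦X⟧) ^ 4 + 19687500 * Polynomial.C (X : ℚ⟦X⟧) ^ 5) * (Dt y) + ((-2004) * Polynomial.C (X : ℚ⟦X⟧) + (-1589248) * Polynomial.C (X : ℚ⟦X⟧) ^ 2 + 14913882 * Polynomial.C (X : ℚ⟦X⟧)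 ^ 3 + (-108036096) * Polynomial.C (X : ℚ⟦X⟧) ^ 4 + 47531250 * Polynomial.C (X : ℚ⟦X⟧) ^ 5) * (Dt^[2] y) + ((-8780) * Polynomial.C (X : ℚ⟦X⟧) + (-2673664) * Polynomial.C (X : ℚ⟦X⟧) ^ 2 + 38522304 * Polynomial.C (X : ℚ⟦X⟧) ^ 3 + (-225558528) * Polynomial.C (X : ℚ⟦X⟧) ^ 4 + 65137500 * Polynomial.C (X : ℚ⟦X⟧) ^ 5) * (Dt^[3] y) + ((-25661) * Polynomial.C (X : ℚ⟦X⟧) + (-1690048) * Polynomial.C (X : ℚ⟦X⟧) ^ 2 + 37120518 * Polynomial.C (X : ℚ⟦X⟧) ^ 3 + (-292783104) * Polynomial.C (X : ℚ⟦X⟧) ^ 4 + 56334375 * Polynomial.C (X : ℚ⟦X⟧) ^ 5) * (Dt^[4] y) + ((-52732) * Polynomial.C (X : ℚ⟦X⟧) + 1529792 * Polynomial.C (X : ℚ⟦X⟧) ^ 2 + 3081780 * Polynomial.C (X : ℚ⟦X⟧) ^ 3 + (-245348352) * Polynomial.C (X : ℚ⟦X⟧) ^ 4 + 32463000 * Polynomial.C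 (X : ℚ⟦X⟧) ^ 5) * (Dt^[5] y) + ((-78176) * Polynomial.C (X : ℚ⟦X⟧) + 4174688 * Polynomial.C (X : ℚ⟦X⟧) ^ 2 + (-23346540) * Polynomial.C (X : ℚ⟦X⟧) ^ 3 + (-136918656) * Polynomial.C (X : ℚ⟦X⟧) ^ 4 + 12858300 * Polynomial.C (X : ℚ⟦X⟧) ^ 5) * (Dt^[6] y) + ((-84304) * Polynomial.C (X : ℚ⟦X⟧) + 4153088 * Polynomial.C (X : ℚ⟦X⟧) ^ 2 + (-22603080) * Polynomial.C (X : ℚ⟦X⟧) ^ 3 + (-51958080) * Polynomial.C (X : ℚ⟦X⟧) ^ 4 + 3553560 * Polynomial.C (X : ℚ⟦X⟧) ^ 5) * (Dt^[7] y) + ((-65675) * Polynomial.C (X : ℚ⟦X⟧) + 2433398 * Polynomial.C (X : ℚ⟦X⟧) ^ 2 + (-10869452) * Polynomial.C (X : ℚ⟦X⟧) ^ 3 + (-13485942) * Polynomial.C (X : ℚ⟦X⟧) ^ 4 + 684999 * Polynomial.C (X : ℚ⟦X⟧) ^ 5) * (Dt^[8] y) + ((-36066) * Polynomial.C (X : ℚ⟦X⟧)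 + 905886 * Polynomial.C (X : ℚ⟦X⟧) ^ 2 + (-3118914) * Polynomial.C (X : ℚ⟦X⟧) ^ 3 + (-2361366) * Polynomial.C (X : ℚ⟦X⟧) ^ 4 + 90396 * Polynomial.C (X : ℚ⟦X⟧) ^ 5) * (Dt^[9] y) + ((-13260) * Polynomial.C (X : ℚ⟦X⟧) + 211694 * Polynomial.C (X : ℚ⟦X⟧) ^ 2 + (-542798) * Polynomial.C (X : ℚ⟦X⟧) ^ 3 + (-267174) * Polynomial.C (X : ℚ⟦X⟧) ^ 4 + 7794 * Polynomial.C (X : ℚ⟦X⟧) ^ 5) * (Dt^[10] y) + ((-2932) * Polynomial.C (X : ℚ⟦X⟧) + 28464 * Polynomial.C (X : ℚ⟦X⟧) ^ 2 + (-53160) * Polynomial.C (X : ℚ⟦X⟧) ^ 3 + (-17664) * Polynomial.C (X : ℚ⟦X⟧) ^ 4 + 396 * Polynomial.C (X : ℚ⟦X⟧) ^ 5) * (Dt^[11] y) + (1 + (-295) * Polynomial.C (X : ℚ⟦X⟧) + 1686 * Polynomial.C (X : ℚ⟦X⟧) ^ 2 + (-2258) * Polynomial.C (X : ℚ⟦X⟧)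 ^ 3 + (-519) * Polynomial.C (X : ℚ⟦X⟧) ^ 4 + 9 * Polynomial.C (X : ℚ⟦X⟧) ^ 5) * (Dt^[12] y) = 0 := by
    have h := congrArg Dt E7
    rw [Dt_zero] at h
    simp only [Dt_add, Dt_mul, Dt_pow, Dt_neg, Dt_ofNat, Dt_one, Dt_natCast, Dt_CX,
      Dt_Dt, Dt_iter_succ, Nat.cast_ofNat, Nat.reduceAdd, Nat.reduceSub] at h
    linear_combination h
  have E9 : ((-17) * Polynomial.C (X : ℚ⟦X⟧) + (-103424) * Polynomial.C (X : ℚ⟦X⟧) ^ 2 + (-157464) * Polynomial.C (X : ℚ⟦X⟧) ^ 3 + (-14155776) * Polynomial.C (X : ℚ⟦X⟧) ^ 4 + 17578125 * Polynomial.C (X : ℚ⟦X⟧) ^ 5) * (y) + ((-291) * Polynomial.C (X : ℚ⟦X⟧) + (-957952) * Polynomial.C (X : ℚ⟦X⟧) ^ 2 + 5786802 * Polynomial.C (X : ℚ⟦X⟧) ^ 3 + (-121503744) * Polynomial.C (X : ℚ⟦X⟧) ^ 4 + 101953125 * Polynomial.C (X : ℚ⟦X⟧) ^ 5) * (Dt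 y) + ((-2278) * Polynomial.C (X : ℚ⟦X⟧) + (-3631616) * Polynomial.C (X : ℚ⟦X⟧) ^ 2 + 46688076 * Polynomial.C (X : ℚ⟦X⟧) ^ 3 + (-461635584) * Polynomial.C (X : ℚ⟦X⟧) ^ 4 + 257343750 * Polynomial.C (X : ℚ⟦X⟧) ^ 5) * (Dt^[2] y) + ((-10784) * Polynomial.C (X : ℚ⟦X⟧) + (-6936576) * Polynomial.C (X : ℚ⟦X⟧) ^ 2 + 130480794 * Polynomial.C (X : ℚ⟦X⟧) ^ 3 + (-1010270208) * Polynomial.C (X : ℚ⟦X⟧) ^ 4 + 373218750 * Polynomial.C (X : ℚ⟦X⟧) ^ 5) * (Dt^[3] y) + ((-34441) * Polynomial.C (X : ℚ⟦X⟧) + (-6053760) * Polynomial.C (X : ℚ⟦X⟧) ^ 2 + 149883858 * Polynomial.C (X : ℚ⟦X⟧) ^ 3 + (-1396690944) * Polynomial.C (X : ℚ⟦X⟧) ^ 4 + 346809375 * Polynomial.C (X : ℚ⟦X⟧) ^ 5) * (Dt^[4] y) + ((-78393) * Polynomial.C (X : ℚ⟦X⟧) + 1369536 * Polynomial.C (X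 : ℚ⟦X⟧) ^ 2 + 46365858 * Polynomial.C (X : ℚ⟦X⟧) ^ 3 + (-1274176512) * Polynomial.C (X : ℚ⟦X⟧) ^ 4 + 218649375 * Polynomial.C (X : ℚ⟦X⟧) ^ 5) * (Dt^[5] y) + ((-130908) * Polynomial.C (X : ℚ⟦X⟧) + 9879168 * Polynomial.C (X : ℚ⟦X⟧) ^ 2 + (-66957840) * Polynomial.C (X : ℚ⟦X⟧) ^ 3 + (-793022976) * Polynomial.C (X : ℚ⟦X⟧) ^ 4 + 96754500 * Polynomial.C (X : ℚ⟦X⟧) ^ 5) * (Dt^[6] y) + ((-162480) * Polynomial.C (X : ℚ⟦X⟧) + 12480864 * Polynomial.C (X : ℚ⟦X⟧) ^ 2 + (-91155780) * Polynomial.C (X : ℚ⟦X⟧) ^ 3 + (-344750976) * Polynomial.C (X : ℚ⟦X⟧) ^ 4 + 30626100 * Polynomial.C (X : ℚ⟦X⟧) ^ 5) * (Dt^[7] y) + ((-149979) * Polynomial.C (X : ℚ⟦X⟧) + 9019884 * Polynomial.C (X : ℚ⟦X⟧) ^ 2 + (-55211436) * Polynomial.C (X : ℚ⟦X⟧) ^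 3 + (-105901848) * Polynomial.C (X : ℚ⟦X⟧) ^ 4 + 6978555 * Polynomial.C (X : ℚ⟦X⟧) ^ 5) * (Dt^[8] y) + ((-101741) * Polynomial.C (X : ℚ⟦X⟧) + 4245170 * Polynomial.C (X : ℚ⟦X⟧) ^ 2 + (-20226194) * Polynomial.C (X : ℚ⟦X⟧) ^ 3 + (-22931406) * Polynomial.C (X : ℚ⟦X⟧) ^ 4 + 1136979 * Polynomial.C (X : ℚ⟦X⟧) ^ 5) * (Dt^[9] y) + ((-49326) * Polynomial.C (X : ℚ⟦X⟧) + 1329274 * Polynomial.C (X : ℚ⟦X⟧) ^ 2 + (-4747308) * Polynomial.C (X : ℚ⟦X⟧) ^ 3 + (-3430062) * Polynomial.C (X : ℚ⟦X⟧) ^ 4 + 129366 * Polynomial.C (X : ℚ⟦X⟧) ^ 5) * (Dt^[10] y) + ((-16192) * Polynomial.C (X : ℚ⟦X⟧) + 268622 * Polynomial.C (X : ℚ⟦X⟧) ^ 2 + (-702278) * Polynomial.C (X : ℚ⟦X⟧) ^ 3 + (-337830) * Polynomial.C (X : ℚ⟦X⟧) ^ 4 + 9774 * Polynomial.C (X :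 ℚ⟦X⟧) ^ 5) * (Dt^[11] y) + ((-3227) * Polynomial.C (X : ℚ⟦X⟧) + 31836 * Polynomial.C (X : ℚ⟦X⟧) ^ 2 + (-59934) * Polynomial.C (X : ℚ⟦X⟧) ^ 3 + (-19740) * Polynomial.C (X : ℚ⟦X⟧) ^ 4 + 441 * Polynomial.C (X : ℚ⟦X⟧) ^ 5) * (Dt^[12] y) + (1 + (-295) * Polynomial.C (X : ℚ⟦X⟧) + 1686 * Polynomial.C (X : ℚ⟦X⟧) ^ 2 + (-2258) * Polynomial.C (X : ℚ⟦X⟧) ^ 3 + (-519) * Polynomial.C (X : ℚ⟦X⟧) ^ 4 + 9 * Polynomial.C (X : ℚ⟦X⟧) ^ 5) * (Dt^[13] y) = 0 := by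
    have h := congrArg Dt E8
    rw [Dt_zero] at h
    simp only [Dt_add, Dt_mul, Dt_pow, Dt_neg, Dt_ofNat, Dt_one, Dt_natCast, Dt_CX,
      Dt_Dt, Dt_iter_succ, Nat.cast_ofNat, Nat.reduceAdd, Nat.reduceSub] at h
    linear_combination h
  have E10 : ((-17) * Polynomial.C (X : ℚ⟦X⟧) + (-206848) * Polynomial.C (X : ℚ⟦X⟧) ^ 2 + (-472392) * Polynomial.C (X : ℚ⟦X⟧) ^ 3 + (-56623104) * Polynomial.C (X : ℚ⟦X⟧) ^ 4 + 87890625 * Polynomial.C (X : ℚ⟦X⟧) ^ 5) * (y) + ((-308) * Polynomial.C (X : ℚ⟦X⟧) + (-2019328) * Polynomial.C (X : ℚ⟦X⟧) ^ 2 + 17202942 * Polynomial.C (X : ℚ⟦X⟧) ^ 3 + (-500170752) * Polynomial.C (X : ℚ⟦X⟧) ^ 4 + 527343750 * Polynomial.C (X : ℚ⟦X⟧) ^ 5) * (Dt y) + ((-2569) * Polynomial.C (X : ℚ⟦X⟧) + (-8221184) * Polynomial.C (X : ℚ⟦X⟧) ^ 2 + 145851030 * Polynomial.C (X : ℚ⟦X⟧)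 ^ 3 + (-1968046080) * Polynomial.C (X : ℚ⟦X⟧) ^ 4 + 1388671875 * Polynomial.C (X : ℚ⟦X⟧) ^ 5) * (Dt^[2] y) + ((-13062) * Polynomial.C (X : ℚ⟦X⟧) + (-17504768) * Polynomial.C (X : ℚ⟦X⟧) ^ 2 + 438130458 * Polynomial.C (X : ℚ⟦X⟧) ^ 3 + (-4502716416) * Polynomial.C (X : ℚ⟦X⟧) ^ 4 + 2123437500 * Polynomial.C (X : ℚ⟦X⟧) ^ 5) * (Dt^[3] y) + ((-45225) * Polynomial.C (X : ℚ⟦X⟧) + (-19044096) * Polynomial.C (X : ℚ⟦X⟧) ^ 2 + 580132368 * Polynomial.C (X : ℚ⟦X⟧) ^ 3 + (-6597033984) * Polynomial.C (X : ℚ⟦X⟧) ^ 4 + 2107265625 * Polynomial.C (X : ℚ⟦X⟧) ^ 5) * (Dt^[4] y) + ((-112834) * Polynomial.C (X : ℚ⟦X⟧) + (-3314688) * Polynomial.C (X : ℚ⟦X⟧) ^ 2 + 288981432 * Polynomial.C (X : ℚ⟦X⟧) ^ 3 + (-6493396992) * Polynomial.C (X : ℚ⟦X⟧) ^ 4 +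 1440056250 * Polynomial.C (X : ℚ⟦X⟧) ^ 5) * (Dt^[5] y) + ((-209301) * Polynomial.C (X : ℚ⟦X⟧) + 21127872 * Polynomial.C (X : ℚ⟦X⟧) ^ 2 + (-154507662) * Polynomial.C (X : ℚ⟦X⟧) ^ 3 + (-4446268416) * Polynomial.C (X : ℚ⟦X⟧) ^ 4 + 702421875 * Polynomial.C (X : ℚ⟦X⟧) ^ 5) * (Dt^[6] y) + ((-293388) * Polynomial.C (X : ℚ⟦X⟧) + 34840896 * Polynomial.C (X : ℚ⟦X⟧) ^ 2 + (-340425180) * Polynomial.C (X : ℚ⟦X⟧) ^ 3 + (-2172026880) * Polynomial.C (X : ℚ⟦X⟧) ^ 4 + 249885000 * Polynomial.C (X : ℚ⟦X⟧) ^ 5) * (Dt^[7] y) + ((-312459) * Polynomial.C (X : ℚ⟦X⟧) + 30520632 * Polynomial.C (X : ℚ⟦X⟧) ^ 2 + (-256790088) * Polynomial.C (X : ℚ⟦X⟧) ^ 3 + (-768358368) * Polynomial.C (X : ℚ⟦X⟧) ^ 4 + 65518875 * Polynomial.C (X : ℚ⟦X⟧) ^ 5) * (Dt^[8] y) + ((-251720)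 * Polynomial.C (X : ℚ⟦X⟧) + 17510224 * Polynomial.C (X : ℚ⟦X⟧) ^ 2 + (-115890018) * Polynomial.C (X : ℚ⟦X⟧) ^ 3 + (-197627472) * Polynomial.C (X : ℚ⟦X⟧) ^ 4 + 12663450 * Polynomial.C (X : ℚ⟦X⟧) ^ 5) * (Dt^[9] y) + ((-151067) * Polynomial.C (X : ℚ⟦X⟧) + 6903718 * Polynomial.C (X : ℚ⟦X⟧) ^ 2 + (-34468118) * Polynomial.C (X : ℚ⟦X⟧) ^ 3 + (-36651654) * Polynomial.C (X : ℚ⟦X⟧) ^ 4 + 1783809 * Polynomial.C (X : ℚ⟦X⟧) ^ 5) * (Dt^[10] y) + ((-65518) * Polynomial.C (X : ℚ⟦X⟧) + 1866518 * Polynomial.C (X : ℚ⟦X⟧) ^ 2 + (-6854142) * Polynomial.C (X : ℚ⟦X⟧) ^ 3 + (-4781382) * Polynomial.C (X : ℚ⟦X⟧) ^ 4 + 178236 * Polynomial.C (X : ℚ⟦X⟧) ^ 5) * (Dt^[11] y) + ((-19419) * Polynomial.C (X : ℚ⟦X⟧) + 332294 * Polynomial.C (X : ℚ⟦X⟧)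 ^ 2 + (-882080) * Polynomial.C (X : ℚ⟦X⟧) ^ 3 + (-416790) * Polynomial.C (X : ℚ⟦X⟧) ^ 4 + 11979 * Polynomial.C (X : ℚ⟦X⟧) ^ 5) * (Dt^[12] y) + ((-3522) * Polynomial.C (X : ℚ⟦X⟧) + 35208 * Polynomial.C (X : ℚ⟦X⟧) ^ 2 + (-66708) * Polynomial.C (X : ℚ⟦X⟧) ^ 3 + (-21816) * Polynomial.C (X : ℚ⟦X⟧) ^ 4 + 486 * Polynomial.C (X : ℚ⟦X⟧) ^ 5) * (Dt^[13] y) + (1 + (-295) * Polynomial.C (X : ℚ⟦X⟧) + 1686 * Polynomial.C (X : ℚ⟦X⟧) ^ 2 + (-2258) * Polynomial.C (X : ℚ⟦X⟧) ^ 3 + (-519) * Polynomial.C (X : ℚ⟦X⟧) ^ 4 + 9 * Polynomial.C (X : ℚ⟦X⟧) ^ 5) * (Dt^[14] y) = 0 := by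
    have h := congrArg Dt E9
    rw [Dt_zero] at h
    simp only [Dt_add, Dt_mul, Dt_pow, Dt_neg, Dt_ofNat, Dt_one, Dt_natCast, Dt_CX,
      Dt_Dt, Dt_iter_succ, Nat.cast_ofNat, Nat.reduceAdd, Nat.reduceSub] at h
    linear_combination h
  have E11 : ((-17) * Polynomial.C (X : ℚ⟦X⟧) + (-413696) * Polynomial.C (X : ℚ⟦X⟧) ^ 2 + (-1417176) * Polynomial.C (X : ℚ⟦X⟧) ^ 3 + (-226492416) * Polynomial.C (X : ℚ⟦X⟧) ^ 4 + 439453125 * Polynomial.C (X : ℚ⟦X⟧) ^ 5) * (y) + ((-325) * Polynomial.C (X : ℚ⟦X⟧) + (-4245504) * Polynomial.C (X : ℚ⟦X⟧) ^ 2 + 51136434 * Polynomial.C (X : ℚ⟦X⟧) ^ 3 + (-2057306112) * Polynomial.C (X : ℚ⟦X⟧) ^ 4 + 2724609375 * Polynomial.C (X : ℚ⟦X⟧) ^ 5) * (Dt y) + ((-2877) * Polynomial.C (X : ℚ⟦X⟧) + (-18461696) * Polynomial.C (X : ℚ⟦X⟧) ^ 2 + 454756032 * Polynomial.C (X : ℚ⟦X⟧)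 ^ 3 + (-8372355072) * Polynomial.C (X : ℚ⟦X⟧) ^ 4 + 7470703125 * Polynomial.C (X : ℚ⟦X⟧) ^ 5) * (Dt^[2] y) + ((-15631) * Polynomial.C (X : ℚ⟦X⟧) + (-43230720) * Polynomial.C (X : ℚ⟦X⟧) ^ 2 + 1460242404 * Polynomial.C (X : ℚ⟦X⟧) ^ 3 + (-19978911744) * Polynomial.C (X : ℚ⟦X⟧) ^ 4 + 12005859375 * Polynomial.C (X : ℚ⟦X⟧) ^ 5) * (Dt^[3] y) + ((-58287) * Polynomial.C (X : ℚ⟦X⟧) + (-55592960) * Polynomial.C (X : ℚ⟦X⟧) ^ 2 + 2178527562 * Polynomial.C (X : ℚ⟦X⟧) ^ 3 + (-30890852352) * Polynomial.C (X : ℚ⟦X⟧) ^ 4 + 12659765625 * Polynomial.C (X : ℚ⟦X⟧) ^ 5) * (Dt^[4] y) + ((-158059) * Polynomial.C (X : ℚ⟦X⟧) + (-25673472) * Polynomial.C (X : ℚ⟦X⟧) ^ 2 + 1447076664 * Polynomial.C (X : ℚ⟦X⟧) ^ 3 + (-32570621952) * Polynomial.C (X : ℚ⟦X⟧) ^ 4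 + 9307546875 * Polynomial.C (X : ℚ⟦X⟧) ^ 5) * (Dt^[5] y) + ((-322135) * Polynomial.C (X : ℚ⟦X⟧) + 38941056 * Polynomial.C (X : ℚ⟦X⟧) ^ 2 + (-174541554) * Polynomial.C (X : ℚ⟦X⟧) ^ 3 + (-24278470656) * Polynomial.C (X : ℚ⟦X⟧) ^ 4 + 4952165625 * Polynomial.C (X : ℚ⟦X⟧) ^ 5) * (Dt^[6] y) + ((-502689) * Polynomial.C (X : ℚ⟦X⟧) + 90809664 * Polynomial.C (X : ℚ⟦X⟧) ^ 2 + (-1175783202) * Polynomial.C (X : ℚ⟦X⟧) ^ 3 + (-13134375936) * Polynomial.C (X : ℚ⟦X⟧) ^ 4 + 1951846875 * Polynomial.C (X : ℚ⟦X⟧) ^ 5) * (Dt^[7] y) + ((-605847) * Polynomial.C (X : ℚ⟦X⟧) + 95882160 * Polynomial.C (X : ℚ⟦X⟧) ^ 2 + (-1110795444) * Polynomial.C (X : ℚ⟦X⟧) ^ 3 + (-5245460352) * Polynomial.C (X : ℚ⟦X⟧) ^ 4 + 577479375 * Polynomial.C (X : ℚ⟦X⟧) ^ 5) * (Dt^[8]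 y) + ((-564179) * Polynomial.C (X : ℚ⟦X⟧) + 65541080 * Polynomial.C (X : ℚ⟦X⟧) ^ 2 + (-604460142) * Polynomial.C (X : ℚ⟦X⟧) ^ 3 + (-1558868256) * Polynomial.C (X : ℚ⟦X⟧) ^ 4 + 128836125 * Polynomial.C (X : ℚ⟦X⟧) ^ 5) * (Dt^[9] y) + ((-402787) * Polynomial.C (X : ℚ⟦X⟧) + 31317660 * Polynomial.C (X : ℚ⟦X⟧) ^ 2 + (-219294372) * Polynomial.C (X : ℚ⟦X⟧) ^ 3 + (-344234088) * Polynomial.C (X : ℚ⟦X⟧) ^ 4 + 21582495 * Polynomial.C (X : ℚ⟦X⟧) ^ 5) * (Dt^[10] y) + ((-216585) * Polynomial.C (X : ℚ⟦X⟧) + 10636754 * Polynomial.C (X : ℚ⟦X⟧) ^ 2 + (-55030544) * Polynomial.C (X : ℚ⟦X⟧) ^ 3 + (-55777182) * Polynomial.C (X : ℚ⟦X⟧) ^ 4 + 2674989 * Polynomial.C (X : ℚ⟦X⟧) ^ 5) * (Dt^[11] y) + ((-84937) * Polynomial.C (X : ℚ⟦X⟧) + 2531106 * Polynomial.C (X :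 ℚ⟦X⟧) ^ 2 + (-9500382) * Polynomial.C (X : ℚ⟦X⟧) ^ 3 + (-6448542) * Polynomial.C (X : ℚ⟦X⟧) ^ 4 + 238131 * Polynomial.C (X : ℚ⟦X⟧) ^ 5) * (Dt^[12] y) + ((-22941) * Polynomial.C (X : ℚ⟦X⟧) + 402710 * Polynomial.C (X : ℚ⟦X⟧) ^ 2 + (-1082204) * Polynomial.C (X : ℚ⟦X⟧) ^ 3 + (-504054) * Polynomial.C (X : ℚ⟦X⟧) ^ 4 + 14409 * Polynomial.C (X : ℚ⟦X⟧) ^ 5) * (Dt^[13] y) + ((-3817) * Polynomial.C (X : ℚ⟦X⟧) + 38580 * Polynomial.C (X : ℚ⟦X⟧) ^ 2 + (-73482) * Polynomial.C (X : ℚ⟦X⟧) ^ 3 + (-23892) * Polynomial.C (X : ℚ⟦X⟧) ^ 4 + 531 * Polynomial.C (X : ℚ⟦X⟧) ^ 5) * (Dt^[14] y) + (1 + (-295) * Polynomial.C (X : ℚ⟦X⟧) + 1686 * Polynomial.C (X : ℚ⟦X⟧) ^ 2 + (-2258) * Polynomial.C (X : ℚ⟦X⟧) ^ 3 + (-519)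 * Polynomial.C (X : ℚ⟦X⟧) ^ 4 + 9 * Polynomial.C (X : ℚ⟦X⟧) ^ 5) * (Dt^[15] y) = 0 := by
    have h := congrArg Dt E10
    rw [Dt_zero] at h
    simp only [Dt_add, Dt_mul, Dt_pow, Dt_neg, Dt_ofNat, Dt_one, Dt_natCast, Dt_CX,
      Dt_Dt, Dt_iter_succ, Nat.cast_ofNat, Nat.reduceAdd, Nat.reduceSub] at h
    linear_combination h
  have E12 : ((-17) * Polynomial.C (X : ℚ⟦X⟧) + (-827392) * Polynomial.C (X : ℚ⟦X⟧) ^ 2 + (-4251528) * Polynomial.C (X : ℚ⟦X⟧) ^ 3 + (-905969664) * Polynomial.C (X : ℚ⟦X⟧) ^ 4 + 2197265625 * Polynomial.C (X : ℚ⟦X⟧) ^ 5) * (y) + ((-342) * Polynomial.C (X : ℚ⟦X⟧) + (-8904704) * Polynomial.C (X : ℚ⟦X⟧) ^ 2 + 151992126 * Polynomial.C (X : ℚ⟦X⟧) ^ 3 + (-8455716864) * Polynomial.C (X : ℚ⟦X⟧) ^ 4 + 14062500000 * Polynomial.C (X : ℚ⟦X⟧) ^ 5) * (Dt y) + ((-3202)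 * Polynomial.C (X : ℚ⟦X⟧) + (-41168896) * Polynomial.C (X : ℚ⟦X⟧) ^ 2 + 1415404530 * Polynomial.C (X : ℚ⟦X⟧) ^ 3 + (-35546726400) * Polynomial.C (X : ℚ⟦X⟧) ^ 4 + 40078125000 * Polynomial.C (X : ℚ⟦X⟧) ^ 5) * (Dt^[2] y) + ((-18508) * Polynomial.C (X : ℚ⟦X⟧) + (-104923136) * Polynomial.C (X : ℚ⟦X⟧) ^ 2 + 4835483244 * Polynomial.C (X : ℚ⟦X⟧) ^ 3 + (-88288002048) * Polynomial.C (X : ℚ⟦X⟧) ^ 4 + 67500000000 * Polynomial.C (X : ℚ⟦X⟧) ^ 5) * (Dt^[3] y) + ((-73918) * Polynomial.C (X : ℚ⟦X⟧) + (-154416640) * Polynomial.C (X : ℚ⟦X⟧) ^ 2 + 7995825090 * Polynomial.C (X : ℚ⟦X⟧) ^ 3 + (-143542321152) * Polynomial.C (X : ℚ⟦X⟧) ^ 4 + 75304687500 * Polynomial.C (X : ℚ⟦X⟧) ^ 5) * (Dt^[4] y) + ((-216346) * Polynomial.C (X : ℚ⟦X⟧) + (-106939904) * Polynomial.C (X :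 ℚ⟦X⟧) ^ 2 + 6519757554 * Polynomial.C (X : ℚ⟦X⟧) ^ 3 + (-161173340160) * Polynomial.C (X : ℚ⟦X⟧) ^ 4 + 59197500000 * Polynomial.C (X : ℚ⟦X⟧) ^ 5) * (Dt^[5] y) + ((-480194) * Polynomial.C (X : ℚ⟦X⟧) + 52208640 * Polynomial.C (X : ℚ⟦X⟧) ^ 2 + 923452002 * Polynomial.C (X : ℚ⟦X⟧) ^ 3 + (-129684504576) * Polynomial.C (X : ℚ⟦X⟧) ^ 4 + 34068375000 * Polynomial.C (X : ℚ⟦X⟧) ^ 5) * (Dt^[6] y) + ((-824824) * Polynomial.C (X : ℚ⟦X⟧) + 220560384 * Polynomial.C (X : ℚ⟦X⟧) ^ 2 + (-3701891160) * Polynomial.C (X : ℚ⟦X⟧) ^ 3 + (-76815974400) * Polynomial.C (X : ℚ⟦X⟧) ^ 4 + 14711400000 * Polynomial.C (X : ℚ⟦X⟧) ^ 5) * (Dt^[7] y) + ((-1108536) * Polynomial.C (X : ℚ⟦X⟧) + 282573984 * Polynomial.C (X : ℚ⟦X⟧) ^ 2 + (-4508169534) * Polynomial.C (X : ℚ⟦X⟧)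 ^ 3 + (-34116217344) * Polynomial.C (X : ℚ⟦X⟧) ^ 4 + 4839243750 * Polynomial.C (X : ℚ⟦X⟧) ^ 5) * (Dt^[8] y) + ((-1170026) * Polynomial.C (X : ℚ⟦X⟧) + 226964320 * Polynomial.C (X : ℚ⟦X⟧) ^ 2 + (-2924175870) * Polynomial.C (X : ℚ⟦X⟧) ^ 3 + (-11480933376) * Polynomial.C (X : ℚ⟦X⟧) ^ 4 + 1221660000 * Polynomial.C (X : ℚ⟦X⟧) ^ 5) * (Dt^[9] y) + ((-966966) * Polynomial.C (X : ℚ⟦X⟧) + 128176400 * Polynomial.C (X : ℚ⟦X⟧) ^ 2 + (-1262343258) * Polynomial.C (X : ℚ⟦X⟧) ^ 3 + (-2935804608) * Polynomial.C (X : ℚ⟦X⟧) ^ 4 + 236748600 * Polynomial.C (X : ℚ⟦X⟧) ^ 5) * (Dt^[10] y) + ((-619372) * Polynomial.C (X : ℚ⟦X⟧) + 52591168 * Polynomial.C (X : ℚ⟦X⟧) ^ 2 + (-384386004) * Polynomial.C (X : ℚ⟦X⟧) ^ 3 + (-567342816) * Polynomial.C (X : ℚ⟦X⟧) ^ 4 +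 34957440 * Polynomial.C (X : ℚ⟦X⟧) ^ 5) * (Dt^[11] y) + ((-301522) * Polynomial.C (X : ℚ⟦X⟧) + 15698966 * Polynomial.C (X : ℚ⟦X⟧) ^ 2 + (-83531690) * Polynomial.C (X : ℚ⟦X⟧) ^ 3 + (-81571350) * Polynomial.C (X : ℚ⟦X⟧) ^ 4 + 3865644 * Polynomial.C (X : ℚ⟦X⟧) ^ 5) * (Dt^[12] y) + ((-107878) * Polynomial.C (X : ℚ⟦X⟧) + 3336526 * Polynomial.C (X : ℚ⟦X⟧) ^ 2 + (-12746994) * Polynomial.C (X : ℚ⟦X⟧) ^ 3 + (-8464758) * Polynomial.C (X : ℚ⟦X⟧) ^ 4 + 310176 * Polynomial.C (X : ℚ⟦X⟧) ^ 5) * (Dt^[13] y) + ((-26758) * Polynomial.C (X : ℚ⟦X⟧) + 479870 * Polynomial.C (X : ℚ⟦X⟧) ^ 2 + (-1302650) * Polynomial.C (X : ℚ⟦X⟧) ^ 3 + (-599622) * Polynomial.C (X : ℚ⟦X⟧) ^ 4 + 17064 * Polynomial.C (X : ℚ⟦X⟧) ^ 5) * (Dt^[14] y) + ((-4112) * Polynomial.C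 (X : ℚ⟦X⟧) + 41952 * Polynomial.C (X : ℚ⟦X⟧) ^ 2 + (-80256) * Polynomial.C (X : ℚ⟦X⟧) ^ 3 + (-25968) * Polynomial.C (X : ℚ⟦X⟧) ^ 4 + 576 * Polynomial.C (X : ℚ⟦X⟧) ^ 5) * (Dt^[15] y) + (1 + (-295) * Polynomial.C (X : ℚ⟦X⟧) + 1686 * Polynomial.C (X : ℚ⟦X⟧) ^ 2 + (-2258) * Polynomial.C (X : ℚ⟦X⟧) ^ 3 + (-519) * Polynomial.C (X : ℚ⟦X⟧) ^ 4 + 9 * Polynomial.C (X : ℚ⟦X⟧) ^ 5) * (Dt^[16] y) = 0 := by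
    have h := congrArg Dt E11
    rw [Dt_zero] at h
    simp only [Dt_add, Dt_mul, Dt_pow, Dt_neg, Dt_ofNat, Dt_one, Dt_natCast, Dt_CX,
      Dt_Dt, Dt_iter_succ, Nat.cast_ofNat, Nat.reduceAdd, Nat.reduceSub] at h
    linear_combination h
  have t0 : twistOp 0 y = y := rfl
  have t1 : twistOp 1 y = y + (3 : ℚ) • (Dt y) + (3 : ℚ) • (Dt^[2] y) + Dt^[3] y := by
    show (fun z => Dt z + (((0 : ℕ) : ℚ) + 1) • z)^[3] (twistOp 0 y) = _
    rw [t0]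
    simp only [iter3]
    simp only [Dt_add, Dt_smul, Dt_Dt, Dt_iter_succ, smul_add]
    simp only [Algebra.smul_def, map_add, map_sub, map_neg, map_mul, map_pow, map_one, map_ofNat, map_natCast, Nat.cast_ofNat, one_smul]
    push_cast
    ring
  have t2 : twistOp 2 y = (8 : ℚ) • (y) + (36 : ℚ) • (Dt y) + (66 : ℚ) • (Dt^[2] y) + (63 : ℚ) • (Dt^[3] y) + (33 : ℚ) • (Dt^[4] y) + (9 : ℚ) • (Dt^[5] y) + Dt^[6] y := by
    show (fun z => Dt z + (((1 : ℕ) : ℚ) + 1) • z)^[3] (twistOp 1 y) = _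
    rw [t1]
    simp only [iter3]
    simp only [Dt_add, Dt_smul, Dt_Dt, Dt_iter_succ, smul_add]
    simp only [Algebra.smul_def, map_add, map_sub, map_neg, map_mul, map_pow, map_one, map_ofNat, map_natCast, Nat.cast_ofNat, one_smul]
    push_cast
    ring
  have t3 : twistOp 3 y = (216 : ℚ) • (y) + (1188 : ℚ) • (Dt y) + (2826 : ℚ) • (Dt^[2] y) + (3815 : ℚ) • (Dt^[3] y) + (3222 : ℚ) • (Dt^[4] y) + (1767 : ℚ) • (Dt^[5] y) + (630 : ℚ) • (Dt^[6] y) + (141 : ℚ) • (Dt^[7] y) + (18 : ℚ) • (Dt^[8] y) + Dt^[9] y := by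
    show (fun z => Dt z + (((2 : ℕ) : ℚ) + 1) • z)^[3] (twistOp 2 y) = _
    rw [t2]
    simp only [iter3]
    simp only [Dt_add, Dt_smul, Dt_Dt, Dt_iter_succ, smul_add]
    simp only [Algebra.smul_def, map_add, map_sub, map_neg, map_mul, map_pow, map_one, map_ofNat, map_natCast, Nat.cast_ofNat, one_smul]
    push_cast
    ring
  have t4 : twistOp 4 y = (13824 : ℚ) • (y) + (86400 : ℚ) • (Dt y) + (240480 : ℚ) • (Dt^[2] y) + (394280 : ℚ) • (Dt^[3] y) + (424428 : ℚ) • (Dt^[4] y) + (316350 : ℚ) • (Dt^[5] y) + (167615 : ℚ) • (Dt^[6] y) + (63690 : ℚ) • (Dt^[7] y) + (17247 : ℚ) • (Dt^[8] y) + (3250 : ℚ) • (Dt^[9] y) + (405 : ℚ) • (Dt^[10] y) + (30 : ℚ) • (Dt^[11] y) + Dt^[12] y := by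
    show (fun z => Dt z + (((3 : ℕ) : ℚ) + 1) • z)^[3] (twistOp 3 y) = _
    rw [t3]
    simp only [iter3]
    simp only [Dt_add, Dt_smul, Dt_Dt, Dt_iter_succ, smul_add]
    simp only [Algebra.smul_def, map_add, map_sub, map_neg, map_mul, map_pow, map_one, map_ofNat, map_natCast, Nat.cast_ofNat, one_smul]
    push_cast
    ring
  have t5 : twistOp 5 y = (1728000 : ℚ) • (y) + (11836800 : ℚ) • (Dt y) + (36747360 : ℚ) • (Dt^[2] y) + (68630824 : ℚ) • (Dt^[3] y) + (86318100 : ℚ) • (Dt^[4] y) + (77530530 : ℚ) • (Dt^[5] y) + (51438825 : ℚ) • (Dt^[6] y) + (25702053 : ℚ) • (Dt^[7] y) + (9763200 : ℚ) • (Dt^[8] y) + (2822740 : ℚ) • (Dt^[9] y) + (616770 : ℚ) • (Dt^[10] y) + (100122 : ℚ) • (Dt^[11] y) + (11700 : ℚ) • (Dt^[12] y) + (930 : ℚ) • (Dt^[13] y) + (45 : ℚ) • (Dt^[14] y) + Dt^[15] y := by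
    show (fun z => Dt z + (((4 : ℕ) : ℚ) + 1) • z)^[3] (twistOp 4 y) = _
    rw [t4]
    simp only [iter3]
    simp only [Dt_add, Dt_smul, Dt_Dt, Dt_iter_succ, smul_add]
    simp only [Algebra.smul_def, map_add, map_sub, map_neg, map_mul, map_pow, map_one, map_ofNat, map_natCast, Nat.cast_ofNat, one_smul]
    push_cast
    ring
  have pd0 : Pd 0 = Polynomial.C (-3 : ℚ) * Polynomial.X ^ 7 + Polynomial.C (9 : ℚ) * Polynomial.X ^ 8 + Polynomial.C (-9 : ℚ) * Polynomial.X ^ 9 + Polynomial.C (3 : ℚ) * Polynomial.X ^ 10 := by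
    simp only [Pd, map_ofNat, map_neg, map_one]
    ring
  have f0 : applyPoly (Pd 0) Dt (twistOp 0 y) = (-3) * (Dt^[7] y) + (9) * (Dt^[8] y) + (-9) * (Dt^[9] y) + (3) * (Dt^[10] y) := by
    rw [pd0]
    simp only [applyPoly_add, applyPoly_CXpow]
    rw [t0]
    try simp only [Dt_iter_add, Dt_iter_smul, Dt_iter_iter, Dt_iter_Dt,
      Function.iterate_one, Function.iterate_zero_apply, Nat.reduceAdd]
    simp only [Algebra.smul_def, map_add, map_sub, map_neg, map_mul, map_pow, map_one, map_ofNat, map_natCast, Nat.cast_ofNat, one_smul]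
    try ring
  have pd1 : Pd 1 = Polynomial.C (-51 : ℚ) * Polynomial.X ^ 3 + Polynomial.C (-414 : ℚ) * Polynomial.X ^ 4 + Polynomial.C (-1272 : ℚ) * Polynomial.X ^ 5 + Polynomial.C (-1716 : ℚ) * Polynomial.X ^ 6 + Polynomial.C (-1405 : ℚ) * Polynomial.X ^ 7 + Polynomial.C (1072 : ℚ) * Polynomial.X ^ 8 + Polynomial.C (-776 : ℚ) * Polynomial.X ^ 9 + Polynomial.C (194 : ℚ) * Polynomial.X ^ 10 := by
    simp only [Pd, map_ofNat, map_neg, map_one]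
    ring
  have f1 : applyPoly (Pd 1) Dt (twistOp 1 y) = (-51) * (Dt^[3] y) + (-567) * (Dt^[4] y) + (-2667) * (Dt^[5] y) + (-6825) * (Dt^[6] y) + (-10783) * (Dt^[7] y) + (-9563) * (Dt^[8] y) + (-3491) * (Dt^[9] y) + (-323) * (Dt^[10] y) + (-674) * (Dt^[11] y) + (-194) * (Dt^[12] y) + (194) * (Dt^[13] y) := by
    rw [pd1]
    simp only [applyPoly_add, applyPoly_CXpow]
    rw [t1]
    try simp only [Dt_iter_add, Dt_iter_smul, Dt_iter_iter, Dt_iter_Dt,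
      Function.iterate_one, Function.iterate_zero_apply, Nat.reduceAdd]
    simp only [Algebra.smul_def, map_add, map_sub, map_neg, map_mul, map_pow, map_one, map_ofNat, map_natCast, Nat.cast_ofNat, one_smul]
    try ring
  have pd2 : Pd 2 = Polynomial.C (-96 : ℚ) * Polynomial.X ^ 0 + Polynomial.C (-480 : ℚ) * Polynomial.X ^ 1 + Polynomial.C (-896 : ℚ) * Polynomial.X ^ 2 + Polynomial.C (1850 : ℚ) * Polynomial.X ^ 3 + Polynomial.C (10697 : ℚ) * Polynomial.X ^ 4 + Polynomial.C (-460 : ℚ) * Polynomial.X ^ 5 + Polynomial.C (-55484 : ℚ) * Polynomial.X ^ 6 + Polynomial.C (-58593 : ℚ) * Polynomial.X ^ 7 + Polynomial.C (3185 : ℚ) * Polynomial.X ^ 8 + Polynomial.C (-1715 : ℚ) * Polynomial.X ^ 9 + Polynomial.C (343 : ℚ) * Polynomial.X ^ 10 := by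
    simp only [Pd, map_ofNat, map_neg, map_one]
    ring
  have f2 : applyPoly (Pd 2) Dt (twistOp 2 y) = (-768) * (y) + (-7296) * (Dt y) + (-30784) * (Dt^[2] y) + (-55184) * (Dt^[3] y) + (59632) * (Dt^[4] y) + (430360) * (Dt^[5] y) + (328136) * (Dt^[6] y) + (-1770111) * (Dt^[7] y) + (-5406037) * (Dt^[8] y) + (-7178747) * (Dt^[9] y) + (-5364560) * (Dt^[10] y) + (-2333572) * (Dt^[11] y) + (-563123) * (Dt^[12] y) + (-64914) * (Dt^[13] y) + (-931) * (Dt^[14] y) + (1372) * (Dt^[15] y) + (343) * (Dt^[16] y) := by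
    rw [pd2]
    simp only [applyPoly_add, applyPoly_CXpow]
    rw [t2]
    try simp only [Dt_iter_add, Dt_iter_smul, Dt_iter_iter, Dt_iter_Dt,
      Function.iterate_one, Function.iterate_zero_apply, Nat.reduceAdd]
    simp only [Algebra.smul_def, map_add, map_sub, map_neg, map_mul, map_pow, map_one, map_ofNat, map_natCast, Nat.cast_ofNat, one_smul]
    try ring
  have pd3 : Pd 3 = Polynomial.C (-2175 : ℚ) * Polynomial.X ^ 0 + Polynomial.C (-13495 : ℚ) * Polynomial.X ^ 1 + Polynomial.C (-31654 : ℚ) * Polynomial.X ^ 2 + Polynomial.C (-34797 : ℚ) * Polynomial.X ^ 3 + Polynomial.C (-11772 : ℚ) * Polynomial.X ^ 4 + Polynomial.C (22736 : ℚ) * Polynomial.X ^ 5 + Polynomial.C (-99127 : ℚ) * Polynomial.X ^ 7 := by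
    simp only [Pd, map_ofNat, map_neg, map_one]
    ring
  have f3 : applyPoly (Pd 3) Dt (twistOp 3 y) = (-469800) * (y) + (-5498820) * (Dt y) + (-29015874) * (Dt^[2] y) + (-91555599) * (Dt^[3] y) + (-191827067) * (Dt^[4] y) + (-275494607) * (Dt^[5] y) + (-266212962) * (Dt^[6] y) + (-178926753) * (Dt^[7] y) + (-152324684) * (Dt^[8] y) + (-254309043) * (Dt^[9] y) + (-350900997) * (Dt^[10] y) + (-307381366) * (Dt^[11] y) + (-172198326) * (Dt^[12] y) + (-62052534) * (Dt^[13] y) + (-13954171) * (Dt^[14] y) + (-1784286) * (Dt^[15] y) + (-99127) * (Dt^[16] y) := by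
    rw [pd3]
    simp only [applyPoly_add, applyPoly_CXpow]
    rw [t3]
    try simp only [Dt_iter_add, Dt_iter_smul, Dt_iter_iter, Dt_iter_Dt,
      Function.iterate_one, Function.iterate_zero_apply, Nat.reduceAdd]
    simp only [Algebra.smul_def, map_add, map_sub, map_neg, map_mul, map_pow, map_one, map_ofNat, map_natCast, Nat.cast_ofNat, one_smul]
    try ring
  have pd4 : Pd 4 = Polynomial.C (-1430 : ℚ) * Polynomial.X ^ 0 + Polynomial.C (-11524 : ℚ) * Polynomial.X ^ 1 + Polynomial.C (-31360 : ℚ) * Polynomial.X ^ 2 + Polynomial.C (-39102 : ℚ) * Polynomial.X ^ 3 + Polynomial.C (-19551 : ℚ) * Polynomial.X ^ 4 := by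
    simp only [Pd, map_ofNat, map_neg, map_one]
    ring
  have f4 : applyPoly (Pd 4) Dt (twistOp 4 y) = (-19768320) * (y) + (-282859776) * (Dt y) + (-1773080640) * (Dt^[2] y) + (-6585161968) * (Dt^[3] y) + (-16340753384) * (Dt^[4] y) + (-28800564932) * (Dt^[5] y) + (-37314129970) * (Dt^[6] y) + (-36247959896) * (Dt^[7] y) + (-26682942698) * (Dt^[8] y) + (-14939760908) * (Dt^[9] y) + (-6346345315) * (Dt^[10] y) + (-2026225504) * (Dt^[11] y) + (-477325547) * (Dt^[12] y) + (-80329384) * (Dt^[13] y) + (-9122575) * (Dt^[14] y) + (-625632) * (Dt^[15] y) + (-19551) * (Dt^[16] y) := by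
    rw [pd4]
    simp only [applyPoly_add, applyPoly_CXpow]
    rw [t4]
    try simp only [Dt_iter_add, Dt_iter_smul, Dt_iter_iter, Dt_iter_Dt,
      Function.iterate_one, Function.iterate_zero_apply, Nat.reduceAdd]
    simp only [Algebra.smul_def, map_add, map_sub, map_neg, map_mul, map_pow, map_one, map_ofNat, map_natCast, Nat.cast_ofNat, one_smul]
    try ring
  have pd5 : Pd 5 = Polynomial.C (343 : ℚ) * Polynomial.X ^ 0 + Polynomial.C (343 : ℚ) * Polynomial.X ^ 1 := by
    simp only [Pd, map_ofNat, map_neg, map_one]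
    ring
  have f5 : applyPoly (Pd 5) Dt (twistOp 5 y) = (592704000) * (y) + (4652726400) * (Dt y) + (16664366880) * (Dt^[2] y) + (36144717112) * (Dt^[3] y) + (53147480932) * (Dt^[4] y) + (56200080090) * (Dt^[5] y) + (44236488765) * (Dt^[6] y) + (26459321154) * (Dt^[7] y) + (12164581779) * (Dt^[8] y) + (4316977420) * (Dt^[9] y) + (1179751930) * (Dt^[10] y) + (245893956) * (Dt^[11] y) + (38354946) * (Dt^[12] y) + (4332090) * (Dt^[13] y) + (334425) * (Dt^[14] y) + (15778) * (Dt^[15] y) + (343) * (Dt^[16] y) := by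
    rw [pd5]
    simp only [applyPoly_add, applyPoly_CXpow]
    rw [t5]
    try simp only [Dt_iter_add, Dt_iter_smul, Dt_iter_iter, Dt_iter_Dt,
      Function.iterate_one, Function.iterate_zero_apply, Nat.reduceAdd]
    simp only [Algebra.smul_def, map_add, map_sub, map_neg, map_mul, map_pow, map_one, map_ofNat, map_natCast, Nat.cast_ofNat, one_smul]
    try ring
  have key : Polynomial.C (((1 - 3 * X) ^ 13 : ℚ⟦X⟧)) *
      (∑ d ∈ Finset.range 6,
        Polynomial.C ((X : ℚ⟦X⟧) ^ d) * applyPoly (Pd d) Dt (twistOp d y)) = 0 := by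
    rw [Finset.sum_range_succ, Finset.sum_range_succ, Finset.sum_range_succ,
      Finset.sum_range_succ, Finset.sum_range_succ, Finset.sum_range_one]
    rw [f0, f1, f2, f3, f4, f5]
    simp only [Algebra.smul_def, map_add, map_sub, map_neg, map_mul, map_pow, map_one, map_ofNat, map_natCast, Nat.cast_ofNat, one_smul]
    linear_combination ((-2808) * Polynomial.C (X : ℚ⟦X⟧) ^ 2 + (-1710072) * Polynomial.C (X : ℚ⟦X⟧) ^ 3 + (-260352144) * Polynomial.C (X : ℚ⟦X⟧) ^ 4 + (-32081237136) * Polynomial.C (X : ℚ⟦X⟧) ^ 5 + (-1445275100880) * Polynomial.C (X : ℚ⟦X⟧) ^ 6 + (-19213552891728) * Polynomial.C (X : ℚ⟦X⟧) ^ 7 + (-89142311301264) * Polynomial.C (X : ℚ⟦X⟧) ^ 8 + (-152977022694288) * Polynomial.C (X : ℚ⟦X⟧) ^ 9 + (-91720505117592) * Polynomial.C (X : ℚ⟦X⟧) ^ 10 + (-15370272829080) * Polynomial.C (X : ℚ⟦X⟧) ^ 11 + (-363454625664) * Polynomial.C (X : ℚ⟦X⟧) ^ 12) * E0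
      + ((-5292) * Polynomial.C (X : ℚ⟦X⟧) ^ 2 + (-6924204) * Polynomial.C (X : ℚ⟦X⟧) ^ 3 + (-734569560) * Polynomial.C (X : ℚ⟦X⟧) ^ 4 + (-82423813464) * Polynomial.C (X : ℚ⟦X⟧) ^ 5 + (-1951460169984) * Polynomial.C (X : ℚ⟦X⟧) ^ 6 + (-6107068659456) * Polynomial.C (X : ℚ⟦X⟧) ^ 7 + 53214419170872 * Polynomial.C (X : ℚ⟦X⟧) ^ 8 + 230260514979960 * Polynomial.C (X : ℚ⟦X⟧) ^ 9 + 231629544078732 * Polynomial.C (X : ℚ⟦X⟧) ^ 10 + 59682786380172 * Polynomial.C (X : ℚ⟦X⟧) ^ 11 + 2338986632256 * Polynomial.C (X : ℚ⟦X⟧) ^ 12) * E1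
      + ((-4086) * Polynomial.C (X : ℚ⟦X⟧) ^ 2 + (-10789254) * Polynomial.C (X : ℚ⟦X⟧) ^ 3 + (-1083925800) * Polynomial.C (X : ℚ⟦X⟧) ^ 4 + (-81943023384) * Polynomial.C (X : ℚ⟦X⟧) ^ 5 + (-321972265764) * Polynomial.C (X : ℚ⟦X⟧) ^ 6 + 10255994770428 * Polynomial.C (X : ℚ⟦X⟧) ^ 7 + 32812663720392 * Polynomial.C (X : ℚ⟦X⟧) ^ 8 + (-86555684657880) * Polynomial.C (X : ℚ⟦X⟧) ^ 9 + (-231283554375798) * Polynomial.C (X : ℚ⟦X⟧) ^ 10 + (-101168076680838) * Polynomial.C (X : ℚ⟦X⟧) ^ 11 + (-6721368161040) * Polynomial.C (X : ℚ⟦X⟧) ^ 12) * E2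
      + ((-3) + (-403) * Polynomial.C (X : ℚ⟦X⟧) + (-17111) * Polynomial.C (X : ℚ⟦X⟧) ^ 2 + (-6929679) * Polynomial.C (X : ℚ⟦X⟧) ^ 3 + (-1113781590) * Polynomial.C (X : ℚ⟦X⟧) ^ 4 + (-25080978510) * Polynomial.C (X : ℚ⟦X⟧) ^ 5 + 751358592810 * Polynomial.C (X : ℚ⟦X⟧) ^ 6 + 3922866055530 * Polynomial.C (X : ℚ⟦X⟧) ^ 7 + (-21799709306055) * Polynomial.C (X : ℚ⟦X⟧) ^ 8 + (-32908937098455) * Polynomial.C (X : ℚ⟦X⟧) ^ 9 + 101711979637677 * Polynomial.C (X : ℚ⟦X⟧) ^ 10 + 96285689103717 * Polynomial.C (X : ℚ⟦X⟧) ^ 11 + 11348732181024 * Polynomial.C (X : ℚ⟦X⟧) ^ 12 + 13124466936 * Polynomial.C (X : ℚ⟦X⟧) ^ 13) * E3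
      + (9 + (-839) * Polynomial.C (X : ℚ⟦X⟧) + (-67223) * Polynomial.C (X : ℚ⟦X⟧) ^ 2 + 57381 * Polynomial.C (X : ℚ⟦X⟧) ^ 3 + (-711737766) * Polynomial.C (X : ℚ⟦X⟧) ^ 4 + 19208997558 * Polynomial.C (X : ℚ⟦X⟧) ^ 5 + 401566109490 * Polynomial.C (X : ℚ⟦X⟧) ^ 6 + (-2043150166854) * Polynomial.C (X : ℚ⟦X⟧) ^ 7 + (-5157602714547) * Polynomial.C (X : ℚ⟦X⟧) ^ 8 + 29085816666213 * Polynomial.C (X : ℚ⟦X⟧) ^ 9 + (-2990728415835) * Polynomial.C (X : ℚ⟦X⟧) ^ 10 + (-53927758430559) * Polynomial.C (X : ℚ⟦X⟧) ^ 11 + (-12420923137776) * Polynomial.C (X : ℚ⟦X⟧) ^ 12 + (-72184568148) * Polynomial.C (X : ℚ⟦X⟧) ^ 13) * E4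
      + ((-9) + 1231 * Polynomial.C (X : ℚ⟦X⟧) + (-112519) * Polynomial.C (X : ℚ⟦X⟧) ^ 2 + 1647939 * Polynomial.C (X : ℚ⟦X⟧) ^ 3 + (-102992310) * Polynomial.C (X : ℚ⟦X⟧) ^ 4 + 19721671344 * Polynomial.C (X : ℚ⟦X⟧) ^ 5 + (-40832447166) * Polynomial.C (X : ℚ⟦X⟧) ^ 6 + (-888371467866) * Polynomial.C (X : ℚ⟦X⟧) ^ 7 + 4077167835051 * Polynomial.C (X : ℚ⟦X⟧) ^ 8 + (-1503036821745) * Polynomial.C (X : ℚ⟦X⟧) ^ 9 + (-15809604022251) * Polynomial.C (X : ℚ⟦X⟧) ^ 10 + 15535045776519 * Polynomial.C (X : ℚ⟦X⟧) ^ 11 + 9115013618244 * Polynomial.C (X : ℚ⟦X⟧) ^ 12 + 171711775746 * Polynomial.C (X : ℚ⟦X⟧) ^ 13) * E5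
      + (3 + 445 * Polynomial.C (X : ℚ⟦X⟧) + (-4174) * Polynomial.C (X : ℚ⟦X⟧) ^ 2 + (-1773534) * Polynomial.C (X : ℚ⟦X⟧) ^ 3 + 241225281 * Polynomial.C (X : ℚ⟦X⟧) ^ 4 + 4855695579 * Polynomial.C (X : ℚ⟦X⟧) ^ 5 + (-72314769492) * Polynomial.C (X : ℚ⟦X⟧) ^ 6 + 231166480284 * Polynomial.C (X : ℚ⟦X⟧) ^ 7 + 394181098677 * Polynomial.C (X : ℚ⟦X⟧) ^ 8 + (-3427328441853) * Polynomial.C (X : ℚ⟦X⟧) ^ 9 + 5454125090946 * Polynomial.C (X : ℚ⟦X⟧) ^ 10 + 134471539746 * Polynomial.C (X : ℚ⟦X⟧) ^ 11 + (-4427071760601) * Polynomial.C (X : ℚ⟦X⟧) ^ 12 + (-231804821115) * Polynomial.C (X : ℚ⟦X⟧) ^ 13) * E6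
      + ((-674) * Polynomial.C (X : ℚ⟦X⟧) + 66324 * Polynomial.C (X : ℚ⟦X⟧) ^ 2 + (-2208024) * Polynomial.C (X : ℚ⟦X⟧) ^ 3 + 197481240 * Polynomial.C (X : ℚ⟦X⟧) ^ 4 + (-1451622222) * Polynomial.C (X : ℚ⟦X⟧) ^ 5 + (-6173691048) * Polynomial.C (X : ℚ⟦X⟧) ^ 6 + 105860632752 * Polynomial.C (X : ℚ⟦X⟧) ^ 7 + (-445264312032) * Polynomial.C (X : ℚ⟦X⟧) ^ 8 + 698483338290 * Polynomial.C (X : ℚ⟦X⟧) ^ 9 + 200966815476 * Polynomial.C (X : ℚ⟦X⟧) ^ 10 + (-1756606185720) * Polynomial.C (X : ℚ⟦X⟧) ^ 11 + 1298392559208 * Polynomial.C (X : ℚ⟦X⟧) ^ 12 + 195773298462 * Polynomial.C (X : ℚ⟦X⟧) ^ 13) * E7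
      + ((-194) * Polynomial.C (X : ℚ⟦X⟧) + 13251 * Polynomial.C (X : ℚ⟦X⟧) ^ 2 + 351999 * Polynomial.C (X : ℚ⟦X⟧) ^ 3 + 45268011 * Polynomial.C (X : ℚ⟦X⟧) ^ 4 + (-887856147) * Polynomial.C (X : ℚ⟦X⟧) ^ 5 + 6284579238 * Polynomial.C (X : ℚ⟦X⟧) ^ 6 + (-18248726034) * Polynomial.C (X : ℚ⟦X⟧) ^ 7 + (-4557126258) * Polynomial.C (X : ℚ⟦X⟧) ^ 8 + 178315067952 * Polynomial.C (X : ℚ⟦X⟧) ^ 9 + (-488078622729) * Polynomial.C (X : ℚ⟦X⟧) ^ 10 + 537475984947 * Polynomial.C (X : ℚ⟦X⟧) ^ 11 + (-139267834137) * Polynomial.C (X : ℚ⟦X⟧) ^ 12 + (-107365430907) * Polynomial.C (X : ℚ⟦X⟧) ^ 13) * E8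
      + (194 * Polynomial.C (X : ℚ⟦X⟧) + (-15250) * Polynomial.C (X : ℚ⟦X⟧) ^ 2 + 987690 * Polynomial.C (X : ℚ⟦X⟧) ^ 3 + (-11075940) * Polynomial.C (X : ℚ⟦X⟧) ^ 4 + (-4130190) * Polynomial.C (X : ℚ⟦X⟧) ^ 5 + 857909556 * Polynomial.C (X : ℚ⟦X⟧) ^ 6 + (-7074288900) * Polynomial.C (X : ℚ⟦X⟧) ^ 7 + 28796141520 * Polynomial.C (X : ℚ⟦X⟧) ^ 8 + (-65925780930) * Polynomial.C (X : ℚ⟦X⟧) ^ 9 + 78308618670 * Polynomial.C (X : ℚ⟦X⟧) ^ 10 + (-21916193814) * Polynomial.C (X : ℚ⟦X⟧) ^ 11 + (-47516730300) * Polynomial.C (X : ℚ⟦X⟧) ^ 12 + 38279695230 * Polynomial.C (X : ℚ⟦X⟧) ^ 13) * E9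
      + ((-931) * Polynomial.C (X : ℚ⟦X⟧) ^ 2 + 222411 * Polynomial.C (X : ℚ⟦X⟧) ^ 3 + (-5192775) * Polynomial.C (X : ℚ⟦X⟧) ^ 4 + 54276075 * Polynomial.C (X : ℚ⟦X⟧) ^ 5 + (-315892710) * Polynomial.C (X : ℚ⟦X⟧) ^ 6 + 1054698246 * Polynomial.C (X : ℚ⟦X⟧) ^ 7 + (-1654811046) * Polynomial.C (X : ℚ⟦X⟧) ^ 8 + (-1173434850) * Polynomial.C (X : ℚ⟦X⟧) ^ 9 + 11067258825 * Polynomial.C (X : ℚ⟦X⟧) ^ 10 + (-22602284145) * Polynomial.C (X : ℚ⟦X⟧) ^ 11 + 21819136941 * Polynomial.C (X : ℚ⟦X⟧) ^ 12 + (-8567360361) * Polynomial.C (X : ℚ⟦X⟧) ^ 13) * E10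
      + (1372 * Polynomial.C (X : ℚ⟦X⟧) ^ 2 + (-22638) * Polynomial.C (X : ℚ⟦X⟧) ^ 3 + 3056130 * Polynomial.C (X : ℚ⟦X⟧) ^ 5 + (-36673560) * Polynomial.C (X : ℚ⟦X⟧) ^ 6 + 231043428 * Polynomial.C (X : ℚ⟦X⟧) ^ 7 + (-924173712) * Polynomial.C (X : ℚ⟦X⟧) ^ 8 + 2475465300 * Polynomial.C (X : ℚ⟦X⟧) ^ 9 + (-4455837540) * Polynomial.C (X : ℚ⟦X⟧) ^ 10 + 5198477130 * Polynomial.C (X : ℚ⟦X⟧) ^ 11 + (-3564670032) * Polynomial.C (X : ℚ⟦X⟧) ^ 12 + 1093705578 * Polynomial.C (X : ℚ⟦X⟧) ^ 13) * E11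
      + (343 * Polynomial.C (X : ℚ⟦X⟧) ^ 2 + (-11319) * Polynomial.C (X : ℚ⟦X⟧) ^ 3 + 169785 * Polynomial.C (X : ℚ⟦X⟧) ^ 4 + (-1528065) * Polynomial.C (X : ℚ⟦X⟧) ^ 5 + 9168390 * Polynomial.C (X : ℚ⟦X⟧) ^ 6 + (-38507238) * Polynomial.C (X : ℚ⟦X⟧) ^ 7 + 115521714 * Polynomial.C (X : ℚ⟦X⟧) ^ 8 + (-247546530) * Polynomial.C (X : ℚ⟦X⟧) ^ 9 + 371319795 * Polynomial.C (X : ℚ⟦X⟧) ^ 10 + (-371319795) * Polynomial.C (X : ℚ⟦X⟧) ^ 11 + 222791877 * Polynomial.C (X : ℚ⟦X⟧) ^ 12 + (-60761421) * Polynomial.C (X : ℚ⟦X⟧) ^ 13) * E12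
  have hne : Polynomial.C (((1 - 3 * X) ^ 13 : ℚ⟦X⟧)) ≠ 0 := by
    rw [Ne, Polynomial.C_eq_zero]
    intro h
    have h2 := congrArg (PowerSeries.constantCoeff (R := ℚ)) h
    simp at h2
  rcases mul_eq_zero.mp key with h | h
  · exact absurd h hne
  · exact h
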